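/- arXiv:2203.17193 — 5 statements merged into one kernel-verified Lean document; each statement's English description precedes it below -/
import Mathlib

section
/- Let A be an n×n complex matrix that is diagonalizable as A = S D S^{-1} with D diagonal and has spectral radius at most 1, and let B be an n×d matrix with full row rank n. Define Σ_t = ∑_{k=0}^{t−1} A^k B B* (A^k)* and γ = λ_max(S^{-1} B B* S^{-*}) / λ_min(S^{-1} B B* S^{-*}). Then for all integers 1 ≤ T₂ ≤ T₁, λ_min(Σ_{T₁}^{-1/2} Σ_{T₂} Σ_{T₁}^{-1/2}) ≥ (1/γ)·(T₂/T₁). -/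
open Matrix BigOperators
open scoped ComplexOrder

/-- Smallest eigenvalue of a Hermitian complex matrix, as the infimum of the
(real part of the) quadratic form over unit vectors. -/
noncomputable def cLambdaMin {n : ℕ} (M : Matrix (Fin n) (Fin n) ℂ) : ℝ :=
  sInf {r : ℝ | ∃ v : Fin n → ℂ,
    (∑ i, Complex.normSq (v i)) = 1 ∧ ((star v) ⬝ᵥ M.mulVec v).re = r}

/-- Largest eigenvalue of a Hermitian complex matrix, as the supremum of the
(real part of the) quadratic form over unit vectors. -/
noncomputable def cLambdaMax {n : ℕ} (M : Matrix (Fin n) (Fin n) ℂ) : ℝ :=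
  sSup {r : ℝ | ∃ v : Fin n → ℂ,
    (∑ i, Complex.normSq (v i)) = 1 ∧ ((star v) ⬝ᵥ M.mulVec v).re = r}

/-- State covariance `Σ_t = ∑_{k=0}^{t−1} A^k B B* (A^k)*` of the linear dynamical
system `x_t = A x_{t−1} + B w_t` with `x_0 = 0`. -/
noncomputable def sigmaMat {n d : ℕ} (A : Matrix (Fin n) (Fin n) ℂ)
    (B : Matrix (Fin n) (Fin d) ℂ) (t : ℕ) : Matrix (Fin n) (Fin n) ℂ :=
  ∑ k ∈ Finset.range t, (A ^ k) * B * Bᴴ * ((A ^ k)ᴴ)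

namespace Stmt7Aux
variable {n m d : ℕ}

lemma quad_conj (M : Matrix (Fin n) (Fin n) ℂ) (P : Matrix (Fin n) (Fin m) ℂ) (v : Fin m → ℂ) :
    star v ⬝ᵥ (Pᴴ * M * P).mulVec v = star (P.mulVec v) ⬝ᵥ M.mulVec (P.mulVec v) := by
  simp [Matrix.star_mulVec, Matrix.dotProduct_mulVec, Matrix.vecMul_vecMul, Matrix.mul_assoc]

lemma quad_sum {ι : Type*} (s : Finset ι) (T : ι → Matrix (Fin n) (Fin n) ℂ) (v : Fin n → ℂ) :
    star v ⬝ᵥ (∑ k ∈ s, T k).mulVec v = ∑ k ∈ s, star v ⬝ᵥ (T k).mulVec v := by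
  classical
  induction s using Finset.induction_on with
  | empty => simp
  | insert _ _ h ih => simp [Finset.sum_insert h, Matrix.add_mulVec, dotProduct_add, ih]

lemma posDef_of_rank (C : Matrix (Fin n) (Fin d) ℂ) (hC : C.rank = n) : (C * Cᴴ).PosDef := by
  refine Matrix.PosDef.of_dotProduct_mulVec_pos (isHermitian_mul_conjTranspose_self C) (fun v hv => ?_)
  have hker : ∀ w : Fin n → ℂ, Cᴴ.mulVec w = 0 → w = 0 := by
    rw [← Matrix.ker_mulVecLin_eq_bot_iff]
    have h1 := LinearMap.finrank_range_add_finrank_ker (Cᴴ.mulVecLin)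
    have h2 : Cᴴ.rank = n := by rw [Matrix.rank_conjTranspose, hC]
    rw [show Module.finrank ℂ (LinearMap.range Cᴴ.mulVecLin) = Cᴴ.rank from rfl, h2] at h1
    simp only [Module.finrank_pi, Fintype.card_fin] at h1
    have h3 : Module.finrank ℂ (LinearMap.ker Cᴴ.mulVecLin) = 0 := by omega
    exact Submodule.finrank_eq_zero.mp h3
  have h1 : star v ⬝ᵥ (C * Cᴴ).mulVec v = star (Cᴴ.mulVec v) ⬝ᵥ (Cᴴ.mulVec v) := by
    simp [Matrix.star_mulVec, Matrix.dotProduct_mulVec, Matrix.vecMul_vecMul]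
  rw [h1]
  exact Matrix.dotProduct_star_self_pos_iff.mpr (fun h => hv (hker v h))

lemma unit_single (hn : 0 < n) :
    (∑ i, Complex.normSq (((Pi.single (⟨0, hn⟩ : Fin n) 1 : Fin n → ℂ)) i)) = 1 := by
  rw [Finset.sum_eq_single (⟨0, hn⟩ : Fin n)]
  · simp
  · intro b _ hb; simp [Pi.single_apply, hb]
  · simp

lemma quad_abs_le (M : Matrix (Fin n) (Fin n) ℂ) (v : Fin n → ℂ)
    (hv : (∑ i, Complex.normSq (v i)) = 1) :
    ‖star v ⬝ᵥ M.mulVec v‖ ≤ ∑ i, ∑ j, ‖M i j‖ := by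
  have hv1 : ∀ i, ‖v i‖ ≤ 1 := by
    intro i
    have h1 : Complex.normSq (v i) ≤ 1 := by
      rw [← hv]
      exact Finset.single_le_sum (fun j _ => Complex.normSq_nonneg (v j)) (Finset.mem_univ i)
    nlinarith [Complex.sq_norm (v i), norm_nonneg (v i)]
  have : star v ⬝ᵥ M.mulVec v = ∑ i, ∑ j, star (v i) * (M i j * v j) := by
    simp [dotProduct, Matrix.mulVec, Finset.mul_sum]
  rw [this]
  refine (norm_sum_le _ _).trans (Finset.sum_le_sum fun i _ => ?_)
  refine (norm_sum_le _ _).trans (Finset.sum_le_sum fun j _ => ?_)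
  rw [norm_mul, norm_mul]
  calc ‖star (v i)‖ * (‖M i j‖ * ‖v j‖)
      ≤ 1 * (‖M i j‖ * 1) := by
        apply mul_le_mul
        · simpa using hv1 i
        · exact mul_le_mul_of_nonneg_left (hv1 j) (norm_nonneg _)
        · positivity
        · norm_num
    _ = ‖M i j‖ := by ring

lemma quad_smul (M : Matrix (Fin n) (Fin n) ℂ) (c : ℝ) (v : Fin n → ℂ) :
    star ((c:ℂ) • v) ⬝ᵥ M.mulVec ((c:ℂ) • v) = ((c:ℝ)^2 : ℝ) * (star v ⬝ᵥ M.mulVec v) := by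
  rw [star_smul, Matrix.mulVec_smul, smul_dotProduct, dotProduct_smul]
  push_cast
  simp [smul_smul]
  ring

lemma sum_mono (f : ℕ → ℝ) (hf0 : ∀ k, 0 ≤ f k) (hmono : ∀ k, f (k+1) ≤ f k)
    {a b : ℕ} (hab : a ≤ b) :
    (a:ℝ) * ∑ k ∈ Finset.range b, f k ≤ (b:ℝ) * ∑ k ∈ Finset.range a, f k := by
  have hanti : ∀ j k : ℕ, j ≤ k → f k ≤ f j := fun j k h =>
    antitone_nat_of_succ_le (fun i => hmono i) h
  induction b, hab using Nat.le_induction with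
  | base => exact le_refl _
  | succ b hab ih =>
    rw [Finset.sum_range_succ]
    have h1 : (a:ℝ) * f b ≤ ∑ k ∈ Finset.range a, f k := by
      calc (a:ℝ) * f b = ∑ _k ∈ Finset.range a, f b := by
            rw [Finset.sum_const, Finset.card_range, nsmul_eq_mul]
        _ ≤ ∑ k ∈ Finset.range a, f k :=
            Finset.sum_le_sum fun k hk => hanti k b (le_trans (le_of_lt (Finset.mem_range.mp hk)) hab)
    push_cast
    nlinarith [Finset.sum_nonneg (fun k (_ : k ∈ Finset.range a) => hf0 k)]

def qset (M : Matrix (Fin n) (Fin n) ℂ) : Set ℝ :=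
  {r : ℝ | ∃ v : Fin n → ℂ,
    (∑ i, Complex.normSq (v i)) = 1 ∧ ((star v) ⬝ᵥ M.mulVec v).re = r}

lemma cLambdaMin_eq (M : Matrix (Fin n) (Fin n) ℂ) : cLambdaMin M = sInf (qset M) := rfl
lemma cLambdaMax_eq (M : Matrix (Fin n) (Fin n) ℂ) : cLambdaMax M = sSup (qset M) := rfl

lemma bddBelow_qset (M : Matrix (Fin n) (Fin n) ℂ) : BddBelow (qset M) := by
  refine ⟨-(∑ i, ∑ j, ‖M i j‖), fun r hr => ?_⟩
  obtain ⟨v, hv, rfl⟩ := hr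
  have h1 := quad_abs_le M v hv
  have h3 := Complex.abs_re_le_norm (star v ⬝ᵥ M.mulVec v)
  have : |(star v ⬝ᵥ M.mulVec v).re| ≤ ∑ i, ∑ j, ‖M i j‖ := le_trans h3 h1
  linarith [abs_nonneg (star v ⬝ᵥ M.mulVec v).re, neg_abs_le (star v ⬝ᵥ M.mulVec v).re]

lemma bddAbove_qset (M : Matrix (Fin n) (Fin n) ℂ) : BddAbove (qset M) := by
  refine ⟨(∑ i, ∑ j, ‖M i j‖), fun r hr => ?_⟩
  obtain ⟨v, hv, rfl⟩ := hr
  exact le_trans (Complex.re_le_norm _) (quad_abs_le M v hv)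

lemma cLambdaMin_le (M : Matrix (Fin n) (Fin n) ℂ) (v : Fin n → ℂ)
    (hv : (∑ i, Complex.normSq (v i)) = 1) :
    cLambdaMin M ≤ (star v ⬝ᵥ M.mulVec v).re :=
  csInf_le (bddBelow_qset M) ⟨v, hv, rfl⟩

lemma le_cLambdaMax (M : Matrix (Fin n) (Fin n) ℂ) (v : Fin n → ℂ)
    (hv : (∑ i, Complex.normSq (v i)) = 1) :
    (star v ⬝ᵥ M.mulVec v).re ≤ cLambdaMax M :=
  le_csSup (bddAbove_qset M) ⟨v, hv, rfl⟩

lemma quad_lower (M : Matrix (Fin n) (Fin n) ℂ) (v : Fin n → ℂ) :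
    cLambdaMin M * (∑ i, Complex.normSq (v i)) ≤ (star v ⬝ᵥ M.mulVec v).re := by
  set N := ∑ i, Complex.normSq (v i) with hN
  have hN0 : 0 ≤ N := Finset.sum_nonneg fun i _ => Complex.normSq_nonneg _
  rcases eq_or_lt_of_le hN0 with h0 | hpos
  · have hv0 : v = 0 := by
      funext i
      have : Complex.normSq (v i) = 0 := by
        have := Finset.single_le_sum (f := fun i => Complex.normSq (v i))
          (fun j _ => Complex.normSq_nonneg (v j)) (Finset.mem_univ i)
        have h2 : Complex.normSq (v i) ≤ 0 := by rw [hN] at h0; linarith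
        linarith [Complex.normSq_nonneg (v i)]
      exact Complex.normSq_eq_zero.mp this
    simp [hv0, ← h0]
  · set c := (Real.sqrt N)⁻¹ with hc
    have hsq : Real.sqrt N > 0 := Real.sqrt_pos.mpr hpos
    have hc2 : c^2 * N = 1 := by
      rw [hc]; rw [inv_pow, Real.sq_sqrt hN0]; field_simp
    have hunit : (∑ i, Complex.normSq (((c:ℂ) • v) i)) = 1 := by
      simp only [Pi.smul_apply, smul_eq_mul, Complex.normSq_mul, Complex.normSq_ofReal]
      rw [← Finset.mul_sum, ← hN]
      nlinarith
    have hle := cLambdaMin_le M ((c:ℂ) • v) hunit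
    rw [quad_smul] at hle
    have hre : ((((c:ℝ)^2 : ℝ) : ℂ) * (star v ⬝ᵥ M.mulVec v)).re
        = (c:ℝ)^2 * (star v ⬝ᵥ M.mulVec v).re := by
      rw [Complex.re_ofReal_mul]
    rw [hre] at hle
    calc cLambdaMin M * N ≤ (c^2 * (star v ⬝ᵥ M.mulVec v).re) * N :=
          mul_le_mul_of_nonneg_right hle hN0
      _ = (star v ⬝ᵥ M.mulVec v).re * (c^2 * N) := by ring
      _ = (star v ⬝ᵥ M.mulVec v).re := by rw [hc2]; ring

lemma quad_upper (M : Matrix (Fin n) (Fin n) ℂ) (v : Fin n → ℂ) :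
    (star v ⬝ᵥ M.mulVec v).re ≤ cLambdaMax M * (∑ i, Complex.normSq (v i)) := by
  set N := ∑ i, Complex.normSq (v i) with hN
  have hN0 : 0 ≤ N := Finset.sum_nonneg fun i _ => Complex.normSq_nonneg _
  rcases eq_or_lt_of_le hN0 with h0 | hpos
  · have hv0 : v = 0 := by
      funext i
      have h2 : Complex.normSq (v i) ≤ 0 := by
        have := Finset.single_le_sum (f := fun i => Complex.normSq (v i))
          (fun j _ => Complex.normSq_nonneg (v j)) (Finset.mem_univ i)
        rw [hN] at h0; linarith
      exact Complex.normSq_eq_zero.mp (le_antisymm h2 (Complex.normSq_nonneg _))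
    simp [hv0, ← h0]
  · set c := (Real.sqrt N)⁻¹ with hc
    have hsq : Real.sqrt N > 0 := Real.sqrt_pos.mpr hpos
    have hc2 : c^2 * N = 1 := by
      rw [hc]; rw [inv_pow, Real.sq_sqrt hN0]; field_simp
    have hunit : (∑ i, Complex.normSq (((c:ℂ) • v) i)) = 1 := by
      simp only [Pi.smul_apply, smul_eq_mul, Complex.normSq_mul, Complex.normSq_ofReal]
      rw [← Finset.mul_sum, ← hN]
      nlinarith
    have hle := le_cLambdaMax M ((c:ℂ) • v) hunit
    rw [quad_smul] at hle
    have hre : ((((c:ℝ)^2 : ℝ) : ℂ) * (star v ⬝ᵥ M.mulVec v)).re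
        = (c:ℝ)^2 * (star v ⬝ᵥ M.mulVec v).re := by
      rw [Complex.re_ofReal_mul]
    rw [hre] at hle
    calc (star v ⬝ᵥ M.mulVec v).re = (star v ⬝ᵥ M.mulVec v).re * (c^2 * N) := by
          rw [hc2]; ring
      _ = (c^2 * (star v ⬝ᵥ M.mulVec v).re) * N := by ring
      _ ≤ cLambdaMax M * N := mul_le_mul_of_nonneg_right hle hN0

lemma pow_conj (S D : Matrix (Fin n) (Fin n) ℂ) (hS : IsUnit S.det) (k : ℕ) :
    (S * D * S⁻¹) ^ k = S * D ^ k * S⁻¹ := by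
  induction k with
  | zero => simp [Matrix.mul_nonsing_inv S hS]
  | succ k ih =>
    rw [pow_succ, ih, pow_succ]
    have h1 : S⁻¹ * S = 1 := Matrix.nonsing_inv_mul S hS
    simp only [Matrix.mul_assoc]
    rw [← Matrix.mul_assoc S⁻¹ S (D * S⁻¹), h1, Matrix.one_mul]

lemma term_eq (S D : Matrix (Fin n) (Fin n) ℂ) (B : Matrix (Fin n) (Fin d) ℂ)
    (hS : IsUnit S.det) (k : ℕ) :
    (S * D * S⁻¹) ^ k * B * Bᴴ * ((S * D * S⁻¹) ^ k)ᴴ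
      = ((Dᴴ) ^ k * Sᴴ)ᴴ * (S⁻¹ * B * Bᴴ * (S⁻¹)ᴴ) * ((Dᴴ) ^ k * Sᴴ) := by
  rw [pow_conj S D hS k]
  simp only [Matrix.conjTranspose_mul, Matrix.conjTranspose_pow,
    Matrix.conjTranspose_conjTranspose, Matrix.mul_assoc]

lemma dot_star_self_re (v : Fin n → ℂ) :
    (star v ⬝ᵥ v).re = ∑ i, Complex.normSq (v i) := by
  rw [show star v ⬝ᵥ v = ∑ i, star (v i) * v i from rfl, Complex.re_sum]
  refine Finset.sum_congr rfl fun i _ => ?_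
  simp [Complex.mul_re, Complex.normSq_apply]

end Stmt7Aux

/-- If `A = S D S⁻¹` is diagonalizable with spectral radius at most `1` and `B` has
full row rank `n`, then with `γ = λ_max(S⁻¹BB*S⁻*)/λ_min(S⁻¹BB*S⁻*)` and `R` the
positive definite square root of `Σ_{T₁}` (so `Σ_{T₁}^{-1/2} = R⁻¹`), for all
`1 ≤ T₂ ≤ T₁`: `λ_min(Σ_{T₁}^{-1/2} Σ_{T₂} Σ_{T₁}^{-1/2}) ≥ (1/γ)·(T₂/T₁)`. -/
theorem stmt7 {n d : ℕ} (A S : Matrix (Fin n) (Fin n) ℂ) (dvec : Fin n → ℂ)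
    (B : Matrix (Fin n) (Fin d) ℂ)
    (hS : IsUnit S.det)
    (hdiag : A = S * Matrix.diagonal dvec * S⁻¹)
    (hρ : ∀ i, ‖dvec i‖ ≤ 1)
    (hB : B.rank = n)
    (T₁ T₂ : ℕ) (hT₂ : 1 ≤ T₂) (hT : T₂ ≤ T₁)
    (R : Matrix (Fin n) (Fin n) ℂ) (hR : R.PosDef) (hRR : R * R = sigmaMat A B T₁) :
    (1 / (cLambdaMax (S⁻¹ * B * Bᴴ * (S⁻¹)ᴴ) / cLambdaMin (S⁻¹ * B * Bᴴ * (S⁻¹)ᴴ)))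
        * ((T₂ : ℝ) / (T₁ : ℝ))
      ≤ cLambdaMin (R⁻¹ * sigmaMat A B T₂ * R⁻¹) := by
  rcases Nat.eq_zero_or_pos n with hn | hn
  · subst hn
    have hempty : ∀ (M : Matrix (Fin 0) (Fin 0) ℂ),
        {r : ℝ | ∃ v : Fin 0 → ℂ,
          (∑ i, Complex.normSq (v i)) = 1 ∧ ((star v) ⬝ᵥ M.mulVec v).re = r} = ∅ := by
      intro M; ext r; simp
    have h1 : ∀ M : Matrix (Fin 0) (Fin 0) ℂ, cLambdaMin M = 0 := fun M => by
      rw [cLambdaMin, hempty M, Real.sInf_empty]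
    have h2 : ∀ M : Matrix (Fin 0) (Fin 0) ℂ, cLambdaMax M = 0 := fun M => by
      rw [cLambdaMax, hempty M, Real.sSup_empty]
    rw [h1, h2, h1]
    norm_num
  · set D := Matrix.diagonal dvec with hD
    set M := S⁻¹ * B * Bᴴ * (S⁻¹)ᴴ with hMdef
    have hMP : M.PosDef := by
      have h1 : (S⁻¹ * B).rank = n := by
        rw [Matrix.rank_mul_eq_right_of_isUnit_det S⁻¹ B (S.isUnit_nonsing_inv_det hS), hB]
      have h2 := Stmt7Aux.posDef_of_rank (S⁻¹ * B) h1
      have h3 : (S⁻¹ * B) * (S⁻¹ * B)ᴴ = M := by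
        rw [Matrix.conjTranspose_mul, hMdef]
        simp only [Matrix.mul_assoc]
      rwa [h3] at h2
    set α := cLambdaMin M with hα
    set β := cLambdaMax M with hβ
    set v0 : Fin n → ℂ := Pi.single (⟨0, hn⟩ : Fin n) 1 with hv0
    have hv0unit : (∑ i, Complex.normSq (v0 i)) = 1 := Stmt7Aux.unit_single hn
    have hv0ne : v0 ≠ 0 := by
      intro h
      have := congrFun h (⟨0, hn⟩ : Fin n)
      rw [hv0] at this
      simp at this
    have hβpos : 0 < β := by
      have h1 := Stmt7Aux.le_cLambdaMax M v0 hv0unit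
      have h2 : (0:ℂ) < (star v0 ⬝ᵥ M.mulVec v0) := hMP.dotProduct_mulVec_pos hv0ne
      have h3 : 0 < (star v0 ⬝ᵥ M.mulVec v0).re := (Complex.lt_def.mp h2).1
      linarith
    have hαnn : 0 ≤ α := by
      rw [hα, Stmt7Aux.cLambdaMin_eq]
      refine le_csInf ⟨_, v0, hv0unit, rfl⟩ ?_
      rintro r ⟨v, hv, rfl⟩
      have hvne : v ≠ 0 := by
        intro h; rw [h] at hv; simp at hv
      exact le_of_lt (Complex.lt_def.mp (hMP.dotProduct_mulVec_pos hvne)).1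
    -- R facts
    have hRH : Rᴴ = R := hR.isHermitian
    have hRdet : IsUnit R.det := hR.det_pos.ne'.isUnit
    have hRinvH : (R⁻¹)ᴴ = R⁻¹ := by rw [Matrix.conjTranspose_nonsing_inv, hRH]
    -- sigma decomposition
    have hsig : ∀ t, sigmaMat A B t
        = ∑ k ∈ Finset.range t, ((Dᴴ) ^ k * Sᴴ)ᴴ * M * ((Dᴴ) ^ k * Sᴴ) := by
      intro t
      rw [sigmaMat]
      refine Finset.sum_congr rfl fun k _ => ?_
      rw [hdiag, hMdef]
      exact Stmt7Aux.term_eq S D B hS k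
    have hT₁pos : (0:ℝ) < (T₁ : ℝ) := by
      have : 0 < T₁ := lt_of_lt_of_le hT₂ hT
      exact_mod_cast this
    have hT₂pos : (0:ℝ) < (T₂ : ℝ) := by exact_mod_cast hT₂
    rw [one_div_div, Stmt7Aux.cLambdaMin_eq]
    refine le_csInf ⟨_, v0, hv0unit, rfl⟩ ?_
    rintro r ⟨v, hv, rfl⟩
    set x : Fin n → ℂ := R⁻¹.mulVec v with hx
    -- quadratic form transported through R⁻¹
    have hq : ∀ t, star v ⬝ᵥ (R⁻¹ * sigmaMat A B t * R⁻¹).mulVec v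
        = star x ⬝ᵥ (sigmaMat A B t).mulVec x := by
      intro t
      rw [hx, ← Stmt7Aux.quad_conj (sigmaMat A B t) R⁻¹ v, hRinvH]
    have key : ∀ t, star x ⬝ᵥ (sigmaMat A B t).mulVec x
        = ∑ k ∈ Finset.range t, star (((Dᴴ) ^ k * Sᴴ).mulVec x)
            ⬝ᵥ M.mulVec (((Dᴴ) ^ k * Sᴴ).mulVec x) := by
      intro t
      rw [hsig t, Stmt7Aux.quad_sum]
      exact Finset.sum_congr rfl fun k _ => Stmt7Aux.quad_conj M ((Dᴴ) ^ k * Sᴴ) x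
    set Nf : ℕ → ℝ := fun k => ∑ i, Complex.normSq ((((Dᴴ) ^ k * Sᴴ).mulVec x) i) with hNf
    have hNnn : ∀ k, 0 ≤ Nf k := fun k =>
      Finset.sum_nonneg fun i _ => Complex.normSq_nonneg _
    have hwsucc : ∀ k i, (((Dᴴ) ^ (k+1) * Sᴴ).mulVec x) i
        = (starRingEnd ℂ) (dvec i) * (((Dᴴ) ^ k * Sᴴ).mulVec x) i := by
      intro k i
      rw [pow_succ', Matrix.mul_assoc, ← Matrix.mulVec_mulVec]
      rw [hD, Matrix.diagonal_conjTranspose, Matrix.mulVec_diagonal]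
      simp [hD]
    have hNmono : ∀ k, Nf (k+1) ≤ Nf k := by
      intro k
      refine Finset.sum_le_sum fun i _ => ?_
      rw [hwsucc k i, Complex.normSq_mul]
      have h1 : Complex.normSq ((starRingEnd ℂ) (dvec i)) ≤ 1 := by
        rw [Complex.normSq_conj, ← Complex.sq_norm]
        exact pow_le_one₀ (norm_nonneg _) (hρ i)
      exact mul_le_of_le_one_left (Complex.normSq_nonneg _) h1
    -- bounds
    have hlow : α * ∑ k ∈ Finset.range T₂, Nf k
        ≤ (star x ⬝ᵥ (sigmaMat A B T₂).mulVec x).re := by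
      rw [key T₂, Complex.re_sum, Finset.mul_sum]
      exact Finset.sum_le_sum fun k _ => Stmt7Aux.quad_lower M _
    have hup : (star x ⬝ᵥ (sigmaMat A B T₁).mulVec x).re
        ≤ β * ∑ k ∈ Finset.range T₁, Nf k := by
      rw [key T₁, Complex.re_sum, Finset.mul_sum]
      exact Finset.sum_le_sum fun k _ => Stmt7Aux.quad_upper M _
    have hT1eq : (star x ⬝ᵥ (sigmaMat A B T₁).mulVec x).re = 1 := by
      rw [hx, ← Stmt7Aux.quad_conj (sigmaMat A B T₁) R⁻¹ v]
      have h1 : (R⁻¹)ᴴ * sigmaMat A B T₁ * R⁻¹ = 1 := by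
        rw [hRinvH, ← hRR, ← Matrix.mul_assoc, Matrix.mul_assoc (R⁻¹ * R) R R⁻¹,
          Matrix.mul_nonsing_inv R hRdet, Matrix.nonsing_inv_mul R hRdet,
          Matrix.mul_one]
      rw [h1, Matrix.one_mulVec, Stmt7Aux.dot_star_self_re, hv]
    -- combine
    set S₁ := ∑ k ∈ Finset.range T₁, Nf k with hS₁
    set S₂ := ∑ k ∈ Finset.range T₂, Nf k with hS₂
    have h1 : 1 ≤ β * S₁ := hT1eq ▸ hup
    have hmm : (T₂:ℝ) * S₁ ≤ (T₁:ℝ) * S₂ := Stmt7Aux.sum_mono Nf hNnn hNmono hT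
    have hfrac : (T₂:ℝ) / (β * (T₁:ℝ)) ≤ S₂ := by
      rw [div_le_iff₀ (by positivity)]
      have e1 : (T₂:ℝ) * 1 ≤ (T₂:ℝ) * (β * S₁) :=
        mul_le_mul_of_nonneg_left h1 hT₂pos.le
      have e2 : β * ((T₂:ℝ) * S₁) ≤ β * ((T₁:ℝ) * S₂) :=
        mul_le_mul_of_nonneg_left hmm hβpos.le
      nlinarith
    calc α / β * ((T₂:ℝ) / (T₁:ℝ)) = α * ((T₂:ℝ) / (β * (T₁:ℝ))) := by ring
      _ ≤ α * S₂ := mul_le_mul_of_nonneg_left hfrac hαnn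
      _ ≤ (star x ⬝ᵥ (sigmaMat A B T₂).mulVec x).re := hlow
      _ = (star v ⬝ᵥ (R⁻¹ * sigmaMat A B T₂ * R⁻¹).mulVec v).re := by rw [hq T₂]
end

section
/- Let M be a real q×n matrix with full column rank, let I ⊆ {1,…,n} be a nonempty index set, and let E_I be the |I|×n matrix extracting the coordinates in I. Then Tr((MᵀM)^{-1}) ≥ Tr((E_I MᵀM E_Iᵀ)^{-1}). -/
open Matrix

set_option maxHeartbeats 1000000

private lemma sum_extend_mul {m n : ℕ} {e : Fin m → Fin n} (he : Function.Injective e)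
    (g : Fin m → ℝ) (f : Fin n → ℝ) :
    ∑ k, Function.extend e g 0 k * f k = ∑ i, g i * f (e i) := by
  have h2 : ∑ k, Function.extend e g 0 k * f k
      = ∑ k ∈ Finset.univ.image e, Function.extend e g 0 k * f k := by
    refine (Finset.sum_subset (Finset.subset_univ _) ?_).symm
    intro k _ hk
    have hnk : ¬ ∃ i, e i = k := by simpa using hk
    rw [Function.extend_apply' _ _ _ hnk]
    simp
  rw [h2, Finset.sum_image (fun x _ y _ h => he h)]
  simp_rw [he.extend_apply]

private lemma quad_extend {m n : ℕ} {e : Fin m → Fin n} (he : Function.Injective e)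
    (A : Matrix (Fin n) (Fin n) ℝ) (g : Fin m → ℝ) :
    Function.extend e g 0 ⬝ᵥ A *ᵥ Function.extend e g 0
      = g ⬝ᵥ (A.submatrix e e) *ᵥ g := by
  rw [dotProduct, sum_extend_mul he]
  rw [dotProduct]
  refine Finset.sum_congr rfl fun i _ => ?_
  congr 1
  rw [mulVec, mulVec, dotProduct, dotProduct]
  have : ∀ k, A (e i) k * Function.extend e g 0 k
      = Function.extend e g 0 k * A (e i) k := fun k => mul_comm _ _
  simp_rw [this]
  rw [sum_extend_mul he]
  refine Finset.sum_congr rfl fun j _ => ?_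
  rw [submatrix_apply, mul_comm]

/-- Let `M` be a real `q×n` matrix of full column rank and let `e : Fin m → Fin n`
(injective, `m ≥ 1`) select a nonempty index set `I ⊆ {1,…,n}`. Then the trace of
the inverse of the full Gram matrix dominates the trace of the inverse of the
corresponding principal submatrix: `Tr((MᵀM)⁻¹) ≥ Tr((E_I MᵀM E_Iᵀ)⁻¹)`. -/
theorem stmt11 {q n m : ℕ} (M : Matrix (Fin q) (Fin n) ℝ) (hrank : M.rank = n)
    (e : Fin m → Fin n) (he : Function.Injective e) (hm : 0 < m) :
    (((Mᵀ * M).submatrix e e)⁻¹).trace ≤ ((Mᵀ * M)⁻¹).trace := by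
  set A : Matrix (Fin n) (Fin n) ℝ := Mᵀ * M with hAdef
  -- M has trivial kernel
  have hker : LinearMap.ker M.mulVecLin = ⊥ := by
    have h1 := M.mulVecLin.finrank_range_add_finrank_ker
    rw [show Module.finrank ℝ (Fin n → ℝ) = n by simp] at h1
    have h2 : Module.finrank ℝ (LinearMap.range M.mulVecLin) = n := hrank
    have : Module.finrank ℝ (LinearMap.ker M.mulVecLin) = 0 := by omega
    exact Submodule.finrank_eq_zero.mp this
  -- A is positive definite
  have hAsymm : Aᵀ = A := by
    rw [hAdef, transpose_mul, transpose_transpose]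
  have hA : A.PosDef := by
    refine PosDef.of_dotProduct_mulVec_pos ?_ fun x hx => ?_
    · show Aᴴ = A
      rw [show Aᴴ = Aᵀ from rfl, hAsymm]
    · have hMx : M *ᵥ x ≠ 0 := by
        intro h
        apply hx
        have : x ∈ LinearMap.ker M.mulVecLin := by
          simpa [LinearMap.mem_ker, mulVecLin_apply] using h
        rw [hker] at this
        simpa using this
      have : star x ⬝ᵥ A *ᵥ x = (M *ᵥ x) ⬝ᵥ (M *ᵥ x) := by
        rw [show (star x : Fin n → ℝ) = x from rfl, hAdef, ← mulVec_mulVec,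
          dotProduct_mulVec, vecMul_transpose]
      rw [this]
      obtain ⟨k, hk⟩ := Function.ne_iff.mp hMx
      exact Finset.sum_pos' (fun j _ => mul_self_nonneg _)
        ⟨k, Finset.mem_univ k, mul_self_pos.mpr hk⟩
  set S : Matrix (Fin m) (Fin m) ℝ := A.submatrix e e with hSdef
  -- S is positive definite
  have hS : S.PosDef := by
    refine PosDef.of_dotProduct_mulVec_pos (hA.isHermitian.submatrix e) fun g hg => ?_
    have hz : Function.extend e g 0 ≠ 0 := by
      intro h
      apply hg
      funext i
      have := congrFun h (e i)
      rwa [he.extend_apply] at this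
    have := hA.dotProduct_mulVec_pos hz
    rw [show (star (Function.extend e g 0) : Fin n → ℝ) = Function.extend e g 0 from rfl,
      quad_extend he] at this
    exact this
  -- invertibility facts
  have hAdet : IsUnit A.det := hA.det_pos.ne'.isUnit
  have hSdet : IsUnit S.det := hS.det_pos.ne'.isUnit
  have hAAinv : A * A⁻¹ = 1 := mul_nonsing_inv A hAdet
  have hSSinv : S * S⁻¹ = 1 := mul_nonsing_inv S hSdet
  set B : Matrix (Fin m) (Fin m) ℝ := S⁻¹ with hBdef
  -- key pointwise inequality
  have key : ∀ i : Fin m, B i i ≤ A⁻¹ (e i) (e i) := by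
    intro i
    set g : Fin m → ℝ := fun i' => B i' i with hgdef
    set z : Fin n → ℝ := Function.extend e g 0 with hzdef
    set x : Fin n → ℝ := Pi.single (e i) 1 with hxdef
    set w : Fin n → ℝ := A⁻¹ *ᵥ x with hwdef
    have hSg : S *ᵥ g = Pi.single i 1 := by
      funext i'
      have h := congrFun (congrFun hSSinv i') i
      rw [Matrix.mul_apply] at h
      show (∑ j, S i' j * B j i) = _
      rw [h, Matrix.one_apply, Pi.single_apply]
    have hzAz : z ⬝ᵥ A *ᵥ z = B i i := by
      rw [hzdef, quad_extend he, ← hSdef, hSg, dotProduct_single, mul_one, hgdef]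
    have hzx : z ⬝ᵥ x = B i i := by
      rw [hxdef, dotProduct_single, mul_one, hzdef, he.extend_apply, hgdef]
    have hAw : A *ᵥ w = x := by
      rw [hwdef, mulVec_mulVec, hAAinv, one_mulVec]
    have hwAz : w ⬝ᵥ A *ᵥ z = B i i := by
      rw [dotProduct_mulVec, ← hAsymm, vecMul_transpose, hAw, hxdef,
        single_dotProduct, one_mul, hzdef, he.extend_apply, hgdef]
    have hwx : w ⬝ᵥ x = A⁻¹ (e i) (e i) := by
      simp [hwdef, hxdef, dotProduct_single, mulVec_single]
    have hpos := hA.posSemidef.dotProduct_mulVec_nonneg (z - w)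
    rw [show (star (z - w) : Fin n → ℝ) = z - w from rfl] at hpos
    have hexp : (z - w) ⬝ᵥ A *ᵥ (z - w)
        = z ⬝ᵥ A *ᵥ z - z ⬝ᵥ x - w ⬝ᵥ A *ᵥ z + w ⬝ᵥ x := by
      rw [mulVec_sub, hAw, sub_dotProduct, dotProduct_sub, dotProduct_sub]
      ring
    rw [hexp, hzAz, hzx, hwAz] at hpos
    linarith
  -- A⁻¹ has nonneg diagonal
  have hdiag : ∀ j : Fin n, 0 ≤ A⁻¹ j j := by
    intro j
    have h := hA.inv.posSemidef.dotProduct_mulVec_nonneg (Pi.single j 1)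
    rw [show (star (Pi.single j 1) : Fin n → ℝ) = Pi.single j 1 from rfl] at h
    simpa [single_dotProduct, mulVec_single] using h
  -- combine
  rw [trace, trace]
  calc ∑ i, B.diag i ≤ ∑ i, A⁻¹ (e i) (e i) := Finset.sum_le_sum fun i _ => key i
    _ = ∑ j ∈ Finset.univ.image e, A⁻¹ j j := by
        rw [Finset.sum_image (g := e) (fun x _ y _ h => he h)]
    _ ≤ ∑ j, A⁻¹.diag j := by
        refine Finset.sum_le_sum_of_subset_of_nonneg (Finset.subset_univ _) ?_
        intro j _ _
        exact hdiag j
end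

section
/- Let S_T = (L_T L_Tᵀ)^{-1}, where L_T is the T×T lower triangular all-ones matrix. The k-th smallest eigenvalue of S_T (i.e., λ_{T−k+1}(S_T) with eigenvalues listed in decreasing order) satisfies λ_{T−k+1}(S_T) ≤ π²·k²/T² for all k = 1,…,T. -/
open Matrix BigOperators Real

/-- The `T×T` lower triangular matrix with all entries `1` on and below the
diagonal. -/
def lowerOnes (T : ℕ) : Matrix (Fin T) (Fin T) ℝ :=
  Matrix.of fun i j => if (j : ℕ) ≤ (i : ℕ) then 1 else 0

namespace Stmt14Aux

/-- Lower bidiagonal matrix with 1 on diagonal, -1 on subdiagonal: the inverse of `lowerOnes`. -/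
def Dm (T : ℕ) : Matrix (Fin T) (Fin T) ℝ :=
  Matrix.of fun i j => if (i : ℕ) = (j : ℕ) then 1 else if (i : ℕ) = (j : ℕ) + 1 then -1 else 0

lemma sum_val_eq {T : ℕ} (c : ℕ) (f : Fin T → ℝ) :
    ∑ k : Fin T, (if (k : ℕ) = c then f k else 0) = if h : c < T then f ⟨c, h⟩ else 0 := by
  split_ifs with h
  · rw [Finset.sum_eq_single (⟨c, h⟩ : Fin T)]
    · simp
    · intro b _ hb
      rw [if_neg]
      simpa [Fin.ext_iff] using hb
    · intro h'; exact absurd (Finset.mem_univ _) h'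
  · apply Finset.sum_eq_zero
    intro k _
    rw [if_neg]
    exact fun hk => h (hk ▸ k.isLt)

lemma lowerOnes_mul_Dm (T : ℕ) : lowerOnes T * Dm T = 1 := by
  ext i j
  have hi := i.isLt
  have hj := j.isLt
  rw [Matrix.mul_apply, Matrix.one_apply]
  have key : ∀ k : Fin T, lowerOnes T i k * Dm T k j =
      (if (k : ℕ) = (j : ℕ) then (if (j : ℕ) ≤ (i : ℕ) then (1:ℝ) else 0) else 0)
      + (if (k : ℕ) = (j : ℕ) + 1 then (if (j : ℕ) + 1 ≤ (i : ℕ) then (-1:ℝ) else 0) else 0) := by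
    intro k
    simp only [lowerOnes, Dm, Matrix.of_apply]
    split_ifs <;> first | ring1 | omega | (exfalso; omega)
  rw [Finset.sum_congr rfl (fun k _ => key k), Finset.sum_add_distrib, sum_val_eq, sum_val_eq,
    dif_pos hj]
  simp only [Fin.ext_iff]
  split_ifs <;> first | ring1 | omega | (exfalso; omega)

lemma Dm_mul_lowerOnes (T : ℕ) : Dm T * lowerOnes T = 1 := by
  ext i j
  have hi := i.isLt
  have hj := j.isLt
  rw [Matrix.mul_apply, Matrix.one_apply]
  have key : ∀ k : Fin T, Dm T i k * lowerOnes T k j =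
      (if (k : ℕ) = (i : ℕ) then (if (j : ℕ) ≤ (i : ℕ) then (1:ℝ) else 0) else 0)
      + (if (k : ℕ) = (i : ℕ) - 1 then
          (if 1 ≤ (i : ℕ) ∧ (j : ℕ) ≤ (i : ℕ) - 1 then (-1:ℝ) else 0) else 0) := by
    intro k
    simp only [lowerOnes, Dm, Matrix.of_apply]
    split_ifs <;> first | ring1 | omega | (exfalso; omega)
  rw [Finset.sum_congr rfl (fun k _ => key k), Finset.sum_add_distrib, sum_val_eq, sum_val_eq,
    dif_pos hi, dif_pos (show (i : ℕ) - 1 < T by omega)]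
  simp only [Fin.ext_iff]
  split_ifs <;> first | ring1 | omega | (exfalso; omega)

lemma inv_eq (T : ℕ) : (lowerOnes T * (lowerOnes T)ᵀ)⁻¹ = (Dm T)ᵀ * Dm T := by
  apply Matrix.inv_eq_right_inv
  have h1 : (lowerOnes T)ᵀ * (Dm T)ᵀ = 1 := by
    rw [← Matrix.transpose_mul, Dm_mul_lowerOnes, Matrix.transpose_one]
  rw [Matrix.mul_assoc, ← Matrix.mul_assoc (lowerOnes T)ᵀ, h1, Matrix.one_mul,
    lowerOnes_mul_Dm]

section Eigen

variable (T : ℕ) (j : ℕ)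

/-- the angle -/
noncomputable def θ : ℝ := (2 * j + 1) * π / (2 * T + 1)

/-- the eigenvalue -/
noncomputable def μ : ℝ := 2 - 2 * Real.cos (θ T j)

/-- sine sequence -/
noncomputable def v : ℕ → ℝ := fun n => Real.sin (n * θ T j)

/-- eigenvector -/
noncomputable def w : Fin T → ℝ := fun i => v T j ((i : ℕ) + 1)

lemma theta_pos (hT : 0 < T) : 0 < θ T j := by
  unfold θ
  apply div_pos
  · positivity
  · positivity

lemma theta_lt_pi (hj : j < T) : θ T j < π := by
  unfold θ
  rw [div_lt_iff₀ (by positivity)]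
  have : (2 * (j:ℝ) + 1) < (2 * (T:ℝ) + 1) := by
    have : (j:ℝ) < T := by exact_mod_cast hj
    linarith
  nlinarith [pi_pos]

lemma v_rec (n : ℕ) : v T j (n + 2) + v T j n = 2 * Real.cos (θ T j) * v T j (n + 1) := by
  unfold v
  have h1 : ((n:ℝ) + 2) * θ T j = ((n:ℝ) + 1) * θ T j + θ T j := by ring
  have h2 : (n:ℝ) * θ T j = ((n:ℝ) + 1) * θ T j - θ T j := by ring
  push_cast
  rw [h1, h2, Real.sin_add, Real.sin_sub]
  ring

lemma v_key (hj : j < T) : v T j (T + 1) = v T j T := by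
  unfold v
  have h : ((T:ℝ) + 1) * θ T j = (2 * j + 1) * π - (T:ℝ) * θ T j := by
    have h2T : (2 * (T:ℝ) + 1) ≠ 0 := by positivity
    unfold θ
    field_simp
    ring
  push_cast
  rw [h, Real.sin_sub]
  have hs : Real.sin ((2 * (j:ℝ) + 1) * π) = 0 := by
    have : (2 * (j:ℝ) + 1) * π = (j:ℝ) * (2 * π) + π := by ring
    rw [this, Real.sin_add]
    have h1 : (j:ℝ) * (2 * π) = (2 * j : ℕ) * π := by push_cast; ring
    have hsin : Real.sin ((j:ℝ) * (2 * π)) = 0 := by rw [h1]; exact Real.sin_nat_mul_pi _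
    have hcos : Real.cos ((j:ℝ) * (2 * π)) = 1 := Real.cos_nat_mul_two_pi _
    rw [hsin, hcos]
    simp
  have hc : Real.cos ((2 * (j:ℝ) + 1) * π) = -1 := by
    have : (2 * (j:ℝ) + 1) * π = (j:ℝ) * (2 * π) + π := by ring
    rw [this, Real.cos_add]
    have h1 : (j:ℝ) * (2 * π) = (2 * j : ℕ) * π := by push_cast; ring
    have hsin : Real.sin ((j:ℝ) * (2 * π)) = 0 := by rw [h1]; exact Real.sin_nat_mul_pi _
    have hcos : Real.cos ((j:ℝ) * (2 * π)) = 1 := Real.cos_nat_mul_two_pi _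
    rw [hsin, hcos]
    simp
  rw [hs, hc]
  ring

lemma Dm_mulVec (x : Fin T → ℝ) (i : Fin T) :
    (Dm T *ᵥ x) i = x i - (if h : 1 ≤ (i : ℕ) then x ⟨(i : ℕ) - 1, by omega⟩ else 0) := by
  rw [Matrix.mulVec, dotProduct]
  have key : ∀ k : Fin T, Dm T i k * x k =
      (if (k : ℕ) = (i : ℕ) then x k else 0)
      + (if (k : ℕ) = (i : ℕ) - 1 then (if 1 ≤ (i : ℕ) then -x k else 0) else 0) := by
    intro k
    simp only [Dm, Matrix.of_apply]
    split_ifs <;> first | ring1 | omega | (exfalso; omega)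
  rw [Finset.sum_congr rfl (fun k _ => key k), Finset.sum_add_distrib]
  have h1 : ∑ k : Fin T, (if (k : ℕ) = (i : ℕ) then x k else 0) = x i := by
    rw [sum_val_eq, dif_pos i.isLt]
  have h2 : ∑ k : Fin T, (if (k : ℕ) = (i : ℕ) - 1 then (if 1 ≤ (i : ℕ) then -x k else 0) else 0)
      = - (if h : 1 ≤ (i : ℕ) then x ⟨(i : ℕ) - 1, by omega⟩ else 0) := by
    rw [sum_val_eq, dif_pos (show (i : ℕ) - 1 < T by have := i.isLt; omega)]
    split_ifs <;> simp
  rw [h1, h2]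
  ring

lemma Dmt_mulVec (u : Fin T → ℝ) (i : Fin T) :
    ((Dm T)ᵀ *ᵥ u) i = u i - (if h : (i : ℕ) + 1 < T then u ⟨(i : ℕ) + 1, h⟩ else 0) := by
  rw [Matrix.mulVec, dotProduct]
  have key : ∀ k : Fin T, (Dm T)ᵀ i k * u k =
      (if (k : ℕ) = (i : ℕ) then u k else 0)
      + (if (k : ℕ) = (i : ℕ) + 1 then -u k else 0) := by
    intro k
    simp only [Dm, Matrix.transpose_apply, Matrix.of_apply]
    split_ifs <;> first | ring1 | omega | (exfalso; omega)
  rw [Finset.sum_congr rfl (fun k _ => key k), Finset.sum_add_distrib]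
  have h1 : ∑ k : Fin T, (if (k : ℕ) = (i : ℕ) then u k else 0) = u i := by
    rw [sum_val_eq, dif_pos i.isLt]
  have h2 : ∑ k : Fin T, (if (k : ℕ) = (i : ℕ) + 1 then -u k else 0)
      = - (if h : (i : ℕ) + 1 < T then u ⟨(i : ℕ) + 1, h⟩ else 0) := by
    rw [sum_val_eq]
    split_ifs <;> simp
  rw [h1, h2]
  ring

lemma S_mulVec_w (hj : j < T) : ((Dm T)ᵀ * Dm T) *ᵥ w T j = μ T j • w T j := by
  rw [← Matrix.mulVec_mulVec]
  have hDw : Dm T *ᵥ w T j = fun i : Fin T => v T j ((i : ℕ) + 1) - v T j (i : ℕ) := by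
    funext i
    rw [Dm_mulVec]
    unfold w
    split_ifs with h
    · show v T j ((i : ℕ) + 1) - v T j ((i : ℕ) - 1 + 1) = v T j ((i : ℕ) + 1) - v T j (i : ℕ)
      rw [show (i : ℕ) - 1 + 1 = (i : ℕ) by omega]
    · have h0 : (i : ℕ) = 0 := by omega
      rw [h0]
      simp [v]
  rw [hDw]
  funext i
  rw [Dmt_mulVec]
  simp only [Pi.smul_apply, smul_eq_mul]
  unfold w μ
  split_ifs with h
  · have hrec := v_rec T j (i : ℕ)
    have : ((i : ℕ) + 1) + 1 = (i : ℕ) + 2 := by omega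
    rw [this]
    linarith [hrec]
  · -- i + 1 = T
    have hiT : (i : ℕ) + 1 = T := by have := i.isLt; omega
    have hrec := v_rec T j (T - 1)
    have e1 : T - 1 + 2 = T + 1 := by omega
    have e2 : T - 1 + 1 = T := by omega
    rw [e1, e2] at hrec
    have hk := v_key T j hj
    rw [hk] at hrec
    have e3 : (i : ℕ) + 1 = T := hiT
    have e4 : (i : ℕ) = T - 1 := by omega
    rw [e3, e4]
    linarith [hrec]

lemma w_ne_zero (hT : 0 < T) (hj : j < T) : w T j ≠ 0 := by
  intro h
  have h0 : w T j ⟨0, hT⟩ = 0 := by rw [h]; rfl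
  unfold w v at h0
  simp only [Nat.cast_zero, Nat.cast_one] at h0
  rw [show ((0:ℕ) + 1 : ℕ) = 1 from rfl] at h0
  have : Real.sin (θ T j) > 0 :=
    Real.sin_pos_of_pos_of_lt_pi (theta_pos T j hT) (theta_lt_pi T j hj)
  rw [Nat.cast_one, one_mul] at h0
  linarith

lemma mu_mem_spectrum (hT : 0 < T) (hj : j < T) :
    μ T j ∈ spectrum ℝ ((Dm T)ᵀ * Dm T) := by
  rw [← AlgEquiv.spectrum_eq (Matrix.toLinAlgEquiv' (R := ℝ) (n := Fin T))]
  have hev : Module.End.HasEigenvector (Matrix.toLinAlgEquiv' ((Dm T)ᵀ * Dm T)) (μ T j)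
      (w T j) := by
    constructor
    · rw [Module.End.mem_eigenspace_iff]
      show ((Dm T)ᵀ * Dm T) *ᵥ w T j = μ T j • w T j
      exact S_mulVec_w T j hj
    · exact w_ne_zero T j hT hj
  exact (Module.End.hasEigenvalue_of_hasEigenvector hev).mem_spectrum

lemma mu_strictMono (hT : 0 < T) {j1 j2 : ℕ} (h12 : j1 < j2) (hj2 : j2 < T) :
    μ T j1 < μ T j2 := by
  unfold μ
  have h1 : Real.cos (θ T j2) < Real.cos (θ T j1) := by
    apply Real.cos_lt_cos_of_nonneg_of_le_pi
    · exact le_of_lt (theta_pos T j1 hT)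
    · exact le_of_lt (theta_lt_pi T j2 hj2)
    · unfold θ
      have hc : (0:ℝ) < 2 * (T:ℝ) + 1 := by positivity
      rw [div_lt_div_iff₀ hc hc]
      have hj12 : (j1:ℝ) < (j2:ℝ) := by exact_mod_cast h12
      nlinarith [mul_pos (show (0:ℝ) < 2 * (j2:ℝ) - 2 * (j1:ℝ) by linarith)
        (mul_pos pi_pos hc)]
  linarith

lemma mu_le (hT : 0 < T) (hj : j < T) :
    μ T j ≤ π ^ 2 * ((j : ℝ) + 1) ^ 2 / (T : ℝ) ^ 2 := by
  have hθpos := theta_pos T j hT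
  have hθpi := theta_lt_pi T j hj
  -- step 1 : μ ≤ θ²
  have h1 : μ T j ≤ (θ T j) ^ 2 := by
    have hhalf0 : 0 ≤ θ T j / 2 := by linarith
    have hhalfpi : θ T j / 2 ≤ π := by linarith [pi_pos]
    have hs1 : Real.sin (θ T j / 2) ≤ θ T j / 2 := Real.sin_le hhalf0
    have hs0 : 0 ≤ Real.sin (θ T j / 2) := Real.sin_nonneg_of_nonneg_of_le_pi hhalf0 hhalfpi
    have hcos : Real.cos (θ T j) = 1 - 2 * Real.sin (θ T j / 2) ^ 2 := by
      have h2 : θ T j = 2 * (θ T j / 2) := by ring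
      rw [h2, Real.cos_two_mul, Real.cos_sq']
      ring
    unfold μ
    rw [hcos]
    nlinarith [hs1, hs0]
  -- step 2 : θ² ≤ π²(j+1)²/T²
  have h2 : (θ T j) ^ 2 ≤ π ^ 2 * ((j : ℝ) + 1) ^ 2 / (T : ℝ) ^ 2 := by
    have hT' : (0:ℝ) < T := by exact_mod_cast hT
    have hθle : θ T j ≤ π * ((j : ℝ) + 1) / T := by
      unfold θ
      rw [div_le_div_iff₀ (by positivity) hT']
      have hjT : (j:ℝ) ≤ (T:ℝ) - 1 := by
        have : (j:ℝ) + 1 ≤ (T:ℝ) := by exact_mod_cast hj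
        linarith
      nlinarith [pi_pos]
    calc (θ T j) ^ 2 ≤ (π * ((j : ℝ) + 1) / T) ^ 2 := by
          apply pow_le_pow_left₀ (le_of_lt hθpos) hθle
      _ = π ^ 2 * ((j : ℝ) + 1) ^ 2 / (T : ℝ) ^ 2 := by
          field_simp
  linarith

end Eigen

end Stmt14Aux

/-- For `S_T = (L_T L_Tᵀ)⁻¹`, if the eigenvalues of `S_T` are listed in increasing
order (via a permutation `σ` making `hS.eigenvalues ∘ σ` monotone), then the
`(k+1)`-th smallest eigenvalue is at most `π²·(k+1)²/T²`; equivalently,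
`λ_{T−k+1}(S_T) ≤ π²k²/T²` for `k = 1,…,T` with eigenvalues in decreasing order. -/
theorem stmt14 (T : ℕ) (hT : 0 < T)
    (hS : ((lowerOnes T * (lowerOnes T)ᵀ)⁻¹).IsHermitian)
    (σ : Equiv.Perm (Fin T)) (hσ : Monotone (hS.eigenvalues ∘ σ)) :
    ∀ k : Fin T,
      hS.eigenvalues (σ k) ≤ π ^ 2 * ((k : ℕ) + 1) ^ 2 / (T : ℝ) ^ 2 := by
  intro k
  -- every Stmt14Aux.μ T j is a value of hS.eigenvalues
  have hspec : ∀ j : ℕ, j < T → ∃ i : Fin T, hS.eigenvalues i = Stmt14Aux.μ T j := by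
    intro j hj
    have h1 : Stmt14Aux.μ T j ∈ spectrum ℝ ((lowerOnes T * (lowerOnes T)ᵀ)⁻¹) := by
      rw [Stmt14Aux.inv_eq T]
      exact Stmt14Aux.mu_mem_spectrum T j hT hj
    rw [Matrix.IsHermitian.spectrum_real_eq_range_eigenvalues hS] at h1
    exact h1.imp fun i hi => hi
  -- main claim : (hS.eigenvalues ∘ σ) k ≤ Stmt14Aux.μ T k
  have hmain : hS.eigenvalues (σ k) ≤ Stmt14Aux.μ T (k : ℕ) := by
    by_contra hcon
    push_neg at hcon
    -- choose preimages
    have hchoice : ∀ m : Fin ((k:ℕ) + 1), ∃ i : Fin T, hS.eigenvalues (σ i) = Stmt14Aux.μ T (m : ℕ) := by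
      intro m
      obtain ⟨i, hi⟩ := hspec (m : ℕ) (by have := m.isLt; have := k.isLt; omega)
      exact ⟨σ.symm i, by simpa using hi⟩
    choose ι hι using hchoice
    have hιlt : ∀ m : Fin ((k:ℕ) + 1), (ι m : ℕ) < (k : ℕ) := by
      intro m
      by_contra hge
      push_neg at hge
      have hk_le : k ≤ ι m := by exact_mod_cast hge
      have h1 : hS.eigenvalues (σ k) ≤ hS.eigenvalues (σ (ι m)) := hσ hk_le
      have h2 : Stmt14Aux.μ T (m : ℕ) ≤ Stmt14Aux.μ T (k : ℕ) := by
        rcases eq_or_lt_of_le (Nat.lt_succ_iff.mp m.isLt) with h | h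
        · rw [h]
        · exact le_of_lt (Stmt14Aux.mu_strictMono T hT h k.isLt)
      rw [hι m] at h1
      linarith
    have hιinj : Function.Injective ι := by
      intro m1 m2 h12
      have hmu : Stmt14Aux.μ T (m1 : ℕ) = Stmt14Aux.μ T (m2 : ℕ) := by rw [← hι m1, ← hι m2, h12]
      rcases lt_trichotomy (m1 : ℕ) (m2 : ℕ) with h | h | h
      · exact absurd hmu (ne_of_lt (Stmt14Aux.mu_strictMono T hT h (by have := m2.isLt; have := k.isLt; omega)))
      · exact Fin.ext h
      · exact absurd hmu.symm (ne_of_lt (Stmt14Aux.mu_strictMono T hT h (by have := m1.isLt; have := k.isLt; omega)))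
    -- injective map Fin (k+1) → Fin k
    have : Function.Injective (fun m : Fin ((k:ℕ) + 1) => (⟨(ι m : ℕ), hιlt m⟩ : Fin (k : ℕ))) := by
      intro m1 m2 h12
      apply hιinj
      apply Fin.ext
      simpa [Fin.ext_iff] using h12
    have hcard := Fintype.card_le_of_injective _ this
    simp at hcard
  calc hS.eigenvalues (σ k) ≤ Stmt14Aux.μ T (k : ℕ) := hmain
    _ ≤ π ^ 2 * ((k : ℕ) + 1) ^ 2 / (T : ℝ) ^ 2 := by
        have := Stmt14Aux.mu_le T (k : ℕ) hT k.isLt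
        exact_mod_cast this
end

section
/- Let M and A be n×n positive definite real matrices and α, β > 0. Define f(τ) = −α/τ + Tr((A + βτ·I)^{-1} M) on τ ∈ (0, ∞). If τ > 0 satisfies f′(τ) = 0, then f″(τ) < 0; that is, every critical point of f on (0, ∞) is a strict local maximum. -/
open Matrix

attribute [local instance] Matrix.linftyOpNormedRing Matrix.linftyOpNormedAlgebra

section Aux
variable {n : ℕ}

abbrev Mat (n:ℕ) := Matrix (Fin n) (Fin n) ℝ

lemma trace_pos_of_posDef (hn : 0 < n) {P : Mat n} (hP : P.PosDef) : 0 < P.trace := by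
  have h : ∀ i, 0 < P i i := by
    intro i
    have := hP.dotProduct_mulVec_pos (x := Pi.single i 1) (by simp [Pi.single_eq_same, funext_iff]; exact ⟨i, by simp⟩)
    simpa [dotProduct, mulVec, Pi.single_apply, Finset.sum_ite_eq] using this
  rw [Matrix.trace]
  exact Finset.sum_pos (fun i _ => h i) (by simpa [Finset.univ_nonempty_iff] using Fin.pos_iff_nonempty.mp hn)

lemma posDef_conj {S P : Mat n} (hP : P.PosDef) (hS : S.IsHermitian)
    (hinj : ∀ x : Fin n → ℝ, x ≠ 0 → S *ᵥ x ≠ 0) : (S * P * S).PosDef := by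
  have hTS : Sᵀ = S := by simpa using hS.eq
  have hTP : Pᵀ = P := by simpa using hP.1.eq
  refine Matrix.PosDef.of_dotProduct_mulVec_pos ?_ ?_
  · simp [Matrix.IsHermitian, conjTranspose_mul, hTS, hTP, Matrix.mul_assoc]
  · intro x hx
    have key : star x ⬝ᵥ ((S * P * S) *ᵥ x) = star (S *ᵥ x) ⬝ᵥ (P *ᵥ (S *ᵥ x)) := by
      simp only [star_trivial]
      rw [← Matrix.mulVec_mulVec, ← Matrix.mulVec_mulVec, Matrix.dotProduct_mulVec]
      congr 1
      rw [← hTS, Matrix.vecMul_transpose, hTS]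
    rw [key]
    exact hP.dotProduct_mulVec_pos (hinj x hx)

lemma trace_mul_pos (hn : 0 < n) {W C : Mat n} (hW : W.PosDef) (hC : C.PosDef) :
    0 < (W * C).trace := by
  obtain ⟨S, hSS, hSh⟩ : ∃ S : Mat n, S * S = W ∧ S.IsHermitian := by
    open scoped MatrixOrder in
    exact ⟨CFC.sqrt W, CFC.sqrt_mul_sqrt_self W hW.posSemidef.nonneg,
      (CFC.sqrt_nonneg W).posSemidef.isHermitian⟩
  have hinj : ∀ x : Fin n → ℝ, x ≠ 0 → S *ᵥ x ≠ 0 := by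
    intro x hx h0
    have hWx : W *ᵥ x = 0 := by rw [← hSS, ← Matrix.mulVec_mulVec, h0, Matrix.mulVec_zero]
    have := hW.dotProduct_mulVec_pos hx
    rw [hWx] at this
    simp at this
  have h1 : (W * C).trace = (S * C * S).trace := by
    rw [← hSS, Matrix.mul_assoc, Matrix.trace_mul_comm]
  rw [h1]
  exact trace_pos_of_posDef hn (posDef_conj hC hSh hinj)



lemma posDef_smul_one {c : ℝ} (hc : 0 < c) : ((c • (1:Mat n))).PosDef := by
  rw [Matrix.smul_one_eq_diagonal]
  exact Matrix.PosDef.diagonal (fun _ => hc)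

lemma posDef_B {A : Mat n} (hA : A.PosDef) {β s : ℝ} (hβ : 0 < β) (hs : 0 < s) :
    (A + (β * s) • (1:Mat n)).PosDef :=
  hA.add (posDef_smul_one (by positivity))

-- derivative of s ↦ (A + (β s) • 1)⁻¹
lemma hasDerivAt_invF (A : Mat n) (hA : A.PosDef) {β : ℝ} (hβ : 0 < β) {s : ℝ} (hs : 0 < s) :
    HasDerivAt (fun t : ℝ => (A + (β * t) • (1:Mat n))⁻¹)
      (-β • ((A + (β * s) • (1:Mat n))⁻¹ * (A + (β * s) • (1:Mat n))⁻¹)) s := by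
  set B := A + (β * s) • (1:Mat n) with hBdef
  have hBpd : B.PosDef := posDef_B hA hβ hs
  have hu : IsUnit B := hBpd.isUnit
  have hF : HasDerivAt (fun t : ℝ => A + (β * t) • (1:Mat n)) (β • (1:Mat n)) s := by
    have h1 : HasDerivAt (fun t : ℝ => β * t) β s := by
      simpa using (hasDerivAt_id s).const_mul β
    exact (h1.smul_const (1:Mat n)).const_add A
  have h2 := hasFDerivAt_ringInverse (𝕜 := ℝ) hu.unit
  rw [hu.unit_spec] at h2
  have hinv := h2.comp_hasDerivAt s hF
  have hcoe : ((hu.unit⁻¹ : (Mat n)ˣ) : Mat n) = B⁻¹ := by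
    rw [Matrix.coe_units_inv, hu.unit_spec]
  simp only [ContinuousLinearMap.neg_apply, ContinuousLinearMap.mulLeftRight_apply, hcoe,
    Function.comp_def, ← Matrix.nonsing_inv_eq_ringInverse] at hinv
  refine hinv.congr_deriv ?_
  rw [Matrix.mul_smul, Matrix.smul_mul]
  simp [smul_smul]

noncomputable def trM (M : Mat n) : Mat n →L[ℝ] ℝ :=
  LinearMap.toContinuousLinearMap
    ((Matrix.traceLinearMap (Fin n) ℝ ℝ).comp (LinearMap.mulRight ℝ M))

@[simp] lemma trM_apply (M X : Mat n) : trM M X = (X * M).trace := rfl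

lemma hasDerivAt_f (M A : Mat n) (hA : A.PosDef) {α β : ℝ} (hβ : 0 < β) {s : ℝ} (hs : 0 < s) :
    HasDerivAt (fun t : ℝ => -α / t + (((A + (β * t) • (1 : Mat n))⁻¹) * M).trace)
      (α / s ^ 2 - β * (((A + (β * s) • (1:Mat n))⁻¹ * (A + (β * s) • (1:Mat n))⁻¹ * M)).trace)
      s := by
  have h1 : HasDerivAt (fun t : ℝ => -α / t) (α / s ^ 2) s := by
    have := (hasDerivAt_inv hs.ne').const_mul (-α)
    refine this.congr_deriv ?_
    field_simp
  have h2 := ((trM M).hasFDerivAt.comp_hasDerivAt s (hasDerivAt_invF A hA hβ hs))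
  have h2' : HasDerivAt (fun t : ℝ => (((A + (β * t) • (1 : Mat n))⁻¹) * M).trace)
      ((-β • ((A + (β * s) • (1:Mat n))⁻¹ * (A + (β * s) • (1:Mat n))⁻¹) * M).trace) s := h2
  refine h1.add (by simpa [Matrix.smul_mul, Matrix.trace_smul, neg_mul, sub_eq_add_neg] using h2')

lemma hasDerivAt_g (M A : Mat n) (hA : A.PosDef) {α β : ℝ} (hβ : 0 < β) {s : ℝ} (hs : 0 < s) :
    HasDerivAt (fun t : ℝ => α / t ^ 2
        - β * (((A + (β * t) • (1:Mat n))⁻¹ * (A + (β * t) • (1:Mat n))⁻¹ * M)).trace)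
      (-2 * α / s ^ 3 + 2 * β ^ 2 *
        (((A + (β * s) • (1:Mat n))⁻¹ * ((A + (β * s) • (1:Mat n))⁻¹
          * ((A + (β * s) • (1:Mat n))⁻¹ * M)))).trace) s := by
  set B := (A + (β * s) • (1:Mat n))⁻¹ with hB
  have h1 : HasDerivAt (fun t : ℝ => α / t ^ 2) (-2 * α / s ^ 3) s := by
    have hp : HasDerivAt (fun t : ℝ => t ^ 2) (2 * s) s := by
      simpa using hasDerivAt_pow 2 s
    have := (hp.inv (by positivity)).const_mul α
    refine this.congr_deriv ?_
    field_simp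
  have hinv := hasDerivAt_invF A hA hβ hs
  have hmul := hinv.mul hinv
  have h2 := ((trM M).hasFDerivAt.comp_hasDerivAt s hmul).const_mul (-β)
  have h3 : HasDerivAt (fun t : ℝ =>
      -β * (((A + (β * t) • (1:Mat n))⁻¹ * (A + (β * t) • (1:Mat n))⁻¹ * M)).trace)
      (2 * β ^ 2 * ((B * (B * (B * M)))).trace) s := by
    refine h2.congr_deriv ?_
    change -β * (((_ : Mat n) * M).trace) = _
    simp only [trM_apply, Function.comp_def, Matrix.smul_mul, Matrix.mul_smul,
      Matrix.add_mul, Matrix.trace_smul, Matrix.trace_add, smul_eq_mul, ← hB]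
    rw [show B * B * B * M = B * (B * (B * M)) by simp [Matrix.mul_assoc],
      show B * (B * B) * M = B * (B * (B * M)) by simp [Matrix.mul_assoc]]
    ring
  have h4 : HasDerivAt (fun t : ℝ => α / t ^ 2 +
      -β * (((A + (β * t) • (1:Mat n))⁻¹ * (A + (β * t) • (1:Mat n))⁻¹ * M)).trace) _ s := h1.add h3
  simpa [sub_eq_add_neg, neg_mul] using h4

lemma posDef_W {A : Mat n} (hA : A.PosDef) {β τ : ℝ} (hβ : 0 < β) (hτ : 0 < τ) :
    ((1:Mat n) - (β * τ) • (A + (β * τ) • (1:Mat n))⁻¹).PosDef := by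
  set c := β * τ with hc
  have hcpos : 0 < c := by positivity
  set B := A + c • (1:Mat n) with hBdef
  have hBpd : B.PosDef := posDef_B hA hβ hτ
  have hBinv : B⁻¹.PosDef := hBpd.inv
  refine Matrix.PosDef.of_dotProduct_mulVec_pos ?_ ?_
  · have h1t : (B⁻¹)ᵀ = B⁻¹ := by simpa using hBinv.1.eq
    simp [Matrix.IsHermitian, Matrix.conjTranspose_sub, Matrix.conjTranspose_smul, h1t]
  · intro x hx
    have hdet : IsUnit B.det := (Matrix.isUnit_iff_isUnit_det B).mp hBpd.isUnit
    set y := B⁻¹ *ᵥ x with hy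
    have hxy : x = B *ᵥ y := by
      rw [hy, Matrix.mulVec_mulVec, Matrix.mul_nonsing_inv _ hdet, Matrix.one_mulVec]
    have hyne : y ≠ 0 := by
      intro h0
      rw [h0, Matrix.mulVec_zero] at hxy
      exact hx hxy
    set a := A *ᵥ y with ha
    have hx2 : x = a + c • y := by
      rw [hxy, hBdef, Matrix.add_mulVec, Matrix.smul_mulVec, Matrix.one_mulVec]
    have hcalc : star x ⬝ᵥ (((1:Mat n) - c • B⁻¹) *ᵥ x) = x ⬝ᵥ x - c * (x ⬝ᵥ y) := by
      simp [Matrix.sub_mulVec, Matrix.smul_mulVec, Matrix.one_mulVec,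
        dotProduct_sub, dotProduct_smul, smul_eq_mul, hy]
    have hexp : x ⬝ᵥ x - c * (x ⬝ᵥ y) = a ⬝ᵥ a + c * (y ⬝ᵥ a) := by
      rw [hx2]
      simp [dotProduct_add, add_dotProduct, dotProduct_smul, smul_dotProduct, smul_eq_mul,
        dotProduct_comm y a]
    have haa : 0 ≤ a ⬝ᵥ a := Finset.sum_nonneg fun i _ => mul_self_nonneg _
    have hya : 0 < y ⬝ᵥ a := by simpa using hA.dotProduct_mulVec_pos hyne
    rw [hcalc, hexp]
    positivity

end Aux

/-- For positive definite `M`, `A` and positive `α`, `β`, every positive critical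
point of `f(τ) = −α/τ + Tr((A + βτ·I)⁻¹ M)` is a strict local maximum:
`f'(τ) = 0` implies `f''(τ) < 0`. -/
theorem stmt16 {n : ℕ} (M A : Matrix (Fin n) (Fin n) ℝ)
    (hM : M.PosDef) (hA : A.PosDef)
    (α β : ℝ) (hα : 0 < α) (hβ : 0 < β) (τ : ℝ) (hτ : 0 < τ)
    (hcrit :
      deriv (fun s : ℝ =>
        -α / s + (((A + (β * s) • (1 : Matrix (Fin n) (Fin n) ℝ))⁻¹) * M).trace) τ = 0) :
    deriv (deriv (fun s : ℝ =>
        -α / s + (((A + (β * s) • (1 : Matrix (Fin n) (Fin n) ℝ))⁻¹) * M).trace)) τ < 0 := by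
  set B := A + (β * τ) • (1 : Mat n) with hBdef
  have hBpd : B.PosDef := posDef_B hA hβ hτ
  set T₂ : ℝ := (B⁻¹ * B⁻¹ * M).trace with hT2
  set T₃ : ℝ := (B⁻¹ * (B⁻¹ * (B⁻¹ * M))).trace with hT3
  -- first derivative at τ equals 0
  have hf' := (hasDerivAt_f M A hA hβ hτ (α := α)).deriv
  rw [hf'] at hcrit
  -- n = 0 is impossible
  rcases Nat.eq_zero_or_pos n with hn | hn
  · exfalso
    subst hn
    have hT2z : T₂ = 0 := by simp [hT2, Matrix.trace]
    rw [← hT2, hT2z] at hcrit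
    have : 0 < α / τ ^ 2 := by positivity
    linarith
  -- second derivative value
  have hev : deriv (fun s : ℝ =>
        -α / s + (((A + (β * s) • (1 : Matrix (Fin n) (Fin n) ℝ))⁻¹) * M).trace)
      =ᶠ[nhds τ] (fun s : ℝ => α / s ^ 2
        - β * (((A + (β * s) • (1:Mat n))⁻¹ * (A + (β * s) • (1:Mat n))⁻¹ * M)).trace) := by
    filter_upwards [isOpen_Ioi.mem_nhds hτ] with s hs
    exact (hasDerivAt_f M A hA hβ hs).deriv
  rw [hev.deriv_eq, (hasDerivAt_g M A hA hβ hτ (α := α)).deriv]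
  -- the key trace inequality
  have hBinv : B⁻¹.PosDef := hBpd.inv
  have hWpd : ((1:Mat n) - (β * τ) • B⁻¹).PosDef := posDef_W hA hβ hτ
  have hinj : ∀ x : Fin n → ℝ, x ≠ 0 → B⁻¹ *ᵥ x ≠ 0 := by
    intro x hx h0
    have := hBinv.dotProduct_mulVec_pos hx
    rw [h0, dotProduct_zero] at this
    exact lt_irrefl 0 this
  have hCpd : (B⁻¹ * M * B⁻¹).PosDef := posDef_conj hM hBinv.1 hinj
  have hkey : 0 < (((1:Mat n) - (β * τ) • B⁻¹) * (B⁻¹ * M * B⁻¹)).trace :=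
    trace_mul_pos hn hWpd hCpd
  have hid : (((1:Mat n) - (β * τ) • B⁻¹) * (B⁻¹ * M * B⁻¹)).trace
      = T₂ - (β * τ) * T₃ := by
    have e1 : (B⁻¹ * M * B⁻¹).trace = T₂ := by
      rw [hT2, Matrix.trace_mul_cycle]
    have e2 : (B⁻¹ * (B⁻¹ * M * B⁻¹)).trace = T₃ := by
      rw [show B⁻¹ * (B⁻¹ * M * B⁻¹) = (B⁻¹ * (B⁻¹ * M)) * B⁻¹ from by
        simp [Matrix.mul_assoc], Matrix.trace_mul_comm, hT3]
    rw [Matrix.sub_mul, Matrix.one_mul, Matrix.smul_mul, Matrix.trace_sub, Matrix.trace_smul,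
      smul_eq_mul, e1, e2]
  rw [hid] at hkey
  -- arithmetic conclusion
  have hα' : α = β * T₂ * τ ^ 2 := by
    have h2 : α / τ ^ 2 = β * T₂ := by linarith
    field_simp at h2
    linarith
  rw [show -2 * α / τ ^ 3 + 2 * β ^ 2 * T₃ = (-2 * α + 2 * β ^ 2 * T₃ * τ ^ 3) / τ ^ 3 by
    field_simp]
  apply div_neg_of_neg_of_pos _ (by positivity)
  rw [hα']
  nlinarith [mul_pos (mul_pos hβ (pow_pos hτ 2)) hkey, pow_pos hτ 3, hβ.le]
end

section
/- Let n ≥ 2 and let v ∈ R^n be a fixed nonzero vector. If ψ is drawn uniformly from the unit sphere S^{n−1}, then for all ε > 0, P( ⟨v, ψ⟩² ≤ (ε/n)·‖v‖₂² ) ≤ (e·ε)^{1/2}. -/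
open MeasureTheory Real

section aux
variable {n : ℕ}

lemma norm_sq_eucl (g : EuclideanSpace ℝ (Fin n)) : ‖g‖ ^ 2 = ∑ i, g i ^ 2 := by
  rw [PiLp.norm_sq_eq_of_L2]
  simp [sq_abs]

lemma gauss_int (c : Fin n → ℝ) :
    ∫ g : EuclideanSpace ℝ (Fin n), Real.exp (-∑ i, c i * g i ^ 2)
      = ∏ i, Real.sqrt (π / c i) := by
  have hmp := (EuclideanSpace.volume_preserving_symm_measurableEquiv_toLp (Fin n)).symm
  rw [← hmp.integral_comp']
  have : ∀ x : Fin n → ℝ, Real.exp (-∑ i, c i * ((MeasurableEquiv.toLp 2 (Fin n → ℝ)).symm.symm x) i ^ 2)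
      = ∏ i, Real.exp (-(c i * x i ^ 2)) := by
    intro x
    rw [← Real.exp_sum]
    simp
  calc ∫ x : Fin n → ℝ, Real.exp (-∑ i, c i * ((MeasurableEquiv.toLp 2 (Fin n → ℝ)).symm.symm x) i ^ 2)
      = ∫ x : Fin n → ℝ, ∏ i, Real.exp (-(c i * x i ^ 2)) := by
        exact integral_congr_ae (Filter.Eventually.of_forall this)
    _ = ∏ i, ∫ x : ℝ, Real.exp (-(c i * x ^ 2)) :=
        integral_fintype_prod_eq_prod (fun i (x : ℝ) => Real.exp (-(c i * x ^ 2)))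
    _ = ∏ i, Real.sqrt (π / c i) := by
        refine Finset.prod_congr rfl fun i _ => ?_
        simpa using integral_gaussian (c i)

lemma gauss_integrable (c : ℝ) (hc : 0 < c) :
    Integrable (fun g : EuclideanSpace ℝ (Fin n) => Real.exp (-c * ‖g‖ ^ 2)) := by
  have hmp := (EuclideanSpace.volume_preserving_symm_measurableEquiv_toLp (Fin n)).symm
  rw [← hmp.integrable_comp_emb (MeasurableEquiv.measurableEmbedding _)]
  have : ((fun g : EuclideanSpace ℝ (Fin n) => Real.exp (-c * ‖g‖ ^ 2)) ∘
      (MeasurableEquiv.toLp 2 (Fin n → ℝ)).symm.symm)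
      = fun x : Fin n → ℝ => ∏ i, Real.exp (-c * x i ^ 2) := by
    ext x
    simp only [Function.comp_apply]
    rw [norm_sq_eucl, ← Real.exp_sum]
    · congr 1
      rw [Finset.mul_sum]
      exact Finset.sum_congr rfl fun i _ => by ring_nf; rfl
  rw [this]
  exact Integrable.fintype_prod fun i => integrable_exp_neg_mul_sq hc

end aux

set_option maxHeartbeats 1000000 in
/-- Small-ball bound for the uniform measure on the unit sphere: if `n ≥ 2`, `μ` is
the uniform (i.e. rotation-invariant) probability measure supported on the unit
sphere of `ℝⁿ`, and `v ≠ 0`, then for all `ε > 0`,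
`P(⟨v, ψ⟩² ≤ (ε/n)·‖v‖²) ≤ (e·ε)^{1/2}`. -/
theorem stmt18 {n : ℕ} (hn : 2 ≤ n)
    (μ : Measure (EuclideanSpace ℝ (Fin n))) [IsProbabilityMeasure μ]
    (hsupp : μ {x : EuclideanSpace ℝ (Fin n) | ‖x‖ = 1}ᶜ = 0)
    (hinv : ∀ f : EuclideanSpace ℝ (Fin n) ≃ₗᵢ[ℝ] EuclideanSpace ℝ (Fin n),
      Measure.map f μ = μ)
    (v : EuclideanSpace ℝ (Fin n)) (hv : v ≠ 0) :
    ∀ ε > (0 : ℝ),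
      (μ {ψ : EuclideanSpace ℝ (Fin n) |
            (inner ℝ v ψ : ℝ) ^ 2 ≤ (ε / n) * ‖v‖ ^ 2}).toReal
        ≤ Real.sqrt (Real.exp 1 * ε) := by
  intro ε hε
  by_cases htriv : 1 ≤ Real.exp 1 * ε
  · refine le_trans ?_ (Real.one_le_sqrt.mpr htriv)
    exact ENNReal.toReal_le_of_le_ofReal zero_le_one (by simpa using prob_le_one)
  push_neg at htriv
  have hexp1 : (2:ℝ) ≤ Real.exp 1 := by have := Real.add_one_le_exp 1; linarith
  have hε1 : ε < 1 := by nlinarith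
  have hn0 : (0:ℝ) < n := by
    have : (0:ℕ) < n := by omega
    exact_mod_cast this
  haveI : NeZero n := ⟨by omega⟩
  set a : ℝ := (1 - ε) / (2 * ε) with ha_def
  have ha : 0 < a := div_pos (by linarith) (by linarith)
  set δ : ℝ := ε / n with hδ_def
  have hδ : 0 < δ := div_pos hε hn0
  have hvn : 0 < ‖v‖ := norm_pos_iff.mpr hv
  set u : EuclideanSpace ℝ (Fin n) := (‖v‖⁻¹ : ℝ) • v with hu_def
  have hu : ‖u‖ = 1 := norm_smul_inv_norm hv
  set A : Set (EuclideanSpace ℝ (Fin n)) :=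
    {ψ : EuclideanSpace ℝ (Fin n) | (inner ℝ v ψ : ℝ) ^ 2 ≤ δ * ‖v‖ ^ 2} with hA_def
  have hcont1 : Continuous fun ψ : EuclideanSpace ℝ (Fin n) => (inner ℝ v ψ : ℝ) :=
    continuous_const.inner continuous_id
  have hAmeas : MeasurableSet A :=
    measurableSet_le ((hcont1.pow 2).measurable) measurable_const
  -- the two-variable function
  set F : EuclideanSpace ℝ (Fin n) → EuclideanSpace ℝ (Fin n) → ℝ :=
    fun ψ g => Real.exp (-(1/2 : ℝ) * ‖g‖ ^ 2) * Real.exp (-a * (inner ℝ g ψ : ℝ) ^ 2)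
    with hF_def
  have hFcont : Continuous fun p : EuclideanSpace ℝ (Fin n) × EuclideanSpace ℝ (Fin n) =>
      F p.1 p.2 := by
    apply Continuous.mul
    · exact (continuous_const.mul (continuous_snd.norm.pow 2)).rexp
    · exact (continuous_const.mul ((continuous_snd.inner continuous_fst).pow 2)).rexp
  have hFnonneg : ∀ ψ g, 0 ≤ F ψ g := fun ψ g => by positivity
  have hGint : Integrable (fun g : EuclideanSpace ℝ (Fin n) =>
      Real.exp (-(1/2 : ℝ) * ‖g‖ ^ 2)) volume := gauss_integrable (1/2) (by norm_num)
  have hFint : Integrable (fun p : EuclideanSpace ℝ (Fin n) × EuclideanSpace ℝ (Fin n) =>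
      F p.1 p.2) (μ.prod volume) := by
    have hBint : Integrable (fun p : EuclideanSpace ℝ (Fin n) × EuclideanSpace ℝ (Fin n) =>
        (1:ℝ) * Real.exp (-(1/2 : ℝ) * ‖p.2‖ ^ 2)) (μ.prod volume) :=
      (integrable_const (1:ℝ)).mul_prod hGint
    refine Integrable.mono' (by simpa only [one_mul] using hBint) hFcont.aestronglyMeasurable ?_
    refine Filter.Eventually.of_forall fun p => ?_
    rw [norm_of_nonneg (hFnonneg _ _)]
    have h2 : Real.exp (-a * (inner ℝ p.2 p.1 : ℝ) ^ 2) ≤ 1 := by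
      rw [Real.exp_le_one_iff]
      nlinarith [sq_nonneg (inner ℝ p.2 p.1 : ℝ)]
    calc F p.1 p.2 ≤ Real.exp (-(1/2 : ℝ) * ‖p.2‖ ^ 2) * 1 := by
          exact mul_le_mul_of_nonneg_left h2 (Real.exp_pos _).le
      _ = Real.exp (-(1/2 : ℝ) * ‖p.2‖ ^ 2) := mul_one _
  -- Step 2: the ψ-first computation of J
  set K₁ : ℝ := Real.sqrt (π / (1/2 + a)) * Real.sqrt (2*π) ^ (n-1) with hK1_def
  have hstep2 : ∀ ψ : EuclideanSpace ℝ (Fin n), ‖ψ‖ = 1 → (∫ g, F ψ g) = K₁ := by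
    intro ψ hψ
    set e0 : EuclideanSpace ℝ (Fin n) := EuclideanSpace.single (0 : Fin n) (1:ℝ) with he0_def
    have he0 : ‖e0‖ = 1 := by simp [he0_def]
    obtain ⟨R, hR⟩ : ∃ R : EuclideanSpace ℝ (Fin n) ≃ₗᵢ[ℝ] EuclideanSpace ℝ (Fin n), R ψ = e0 :=
      ⟨Submodule.reflection (ℝ ∙ (ψ - e0))ᗮ, Submodule.reflection_sub (by rw [hψ, he0])⟩
    have hmp := R.symm.measurePreserving
    have hchg : (∫ g, F ψ g) = ∫ h, F ψ (R.symm h) := by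
      rw [hmp.integral_comp (R.symm.toMeasurableEquiv.measurableEmbedding) (F ψ)]
    rw [hchg]
    have hpt : ∀ h : EuclideanSpace ℝ (Fin n), F ψ (R.symm h)
        = Real.exp (-∑ i, (if i = 0 then 1/2 + a else 1/2) * h i ^ 2) := by
      intro h
      have h1 : ‖R.symm h‖ = ‖h‖ := R.symm.norm_map h
      have h2 : (inner ℝ (R.symm h) ψ : ℝ) = h 0 := by
        have h3 := R.inner_map_map (R.symm h) ψ
        rw [R.apply_symm_apply, hR] at h3
        rw [← h3, he0_def]
        simp [EuclideanSpace.inner_single_right]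
      rw [hF_def]
      dsimp only
      rw [h1, h2, ← Real.exp_add]
      congr 1
      have hsum : ∑ i, (if i = 0 then 1/2 + a else 1/2) * h i ^ 2
          = ∑ i, ((1/2 : ℝ) * h i ^ 2 + if i = 0 then a * h i ^ 2 else 0) :=
        Finset.sum_congr rfl fun i _ => by split_ifs <;> ring
      rw [hsum, Finset.sum_add_distrib, Finset.sum_ite_eq' Finset.univ (0 : Fin n)
        (fun i => a * h i ^ 2), norm_sq_eucl h, if_pos (Finset.mem_univ (0 : Fin n)),
        ← Finset.mul_sum]
      ring
    rw [integral_congr_ae (Filter.Eventually.of_forall hpt),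
      gauss_int (fun i => if i = 0 then 1/2 + a else 1/2)]
    rw [← Finset.mul_prod_erase Finset.univ _ (Finset.mem_univ (0 : Fin n))]
    have hrest : ∀ i ∈ Finset.univ.erase (0 : Fin n),
        Real.sqrt (π / (if i = 0 then 1/2 + a else 1/2)) = Real.sqrt (2*π) := by
      intro i hi
      rw [if_neg (Finset.ne_of_mem_erase hi)]
      congr 1
      ring
    rw [Finset.prod_congr rfl hrest, Finset.prod_const,
      Finset.card_erase_of_mem (Finset.mem_univ _), Finset.card_univ, Fintype.card_fin,
      if_pos rfl]
  have hae : ∀ᵐ ψ ∂μ, ‖ψ‖ = 1 := by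
    rw [ae_iff]
    convert hsupp using 2
    rfl
  have hJval : (∫ p : EuclideanSpace ℝ (Fin n) × EuclideanSpace ℝ (Fin n),
      F p.1 p.2 ∂(μ.prod volume)) = K₁ := by
    rw [integral_prod _ hFint]
    rw [integral_congr_ae (hae.mono fun ψ hψ => hstep2 ψ hψ), integral_const, measureReal_def, measure_univ,
      ENNReal.toReal_one, one_smul]
  -- Step 1: the g-first lower bound
  have hbdd : ∀ (f : EuclideanSpace ℝ (Fin n) → ℝ), Continuous f → (∀ x, |f x| ≤ 1) →
      Integrable f μ := fun f hf hb =>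
    (integrable_const (1:ℝ)).mono' hf.aestronglyMeasurable (Filter.Eventually.of_forall hb)
  have hkey : ∀ g : EuclideanSpace ℝ (Fin n),
      (μ A).toReal * Real.exp (-(a*δ) * ‖g‖ ^ 2)
        ≤ ∫ ψ, Real.exp (-a * (inner ℝ g ψ : ℝ) ^ 2) ∂μ := by
    intro g
    have hinv_eq : (∫ ψ, Real.exp (-a * (inner ℝ g ψ : ℝ) ^ 2) ∂μ)
        = ∫ ψ, Real.exp (-a * (‖g‖ ^ 2 * (inner ℝ u ψ : ℝ) ^ 2)) ∂μ := by
      rcases eq_or_ne g 0 with rfl | hg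
      · simp
      · have hng : ‖(‖g‖⁻¹ : ℝ) • g‖ = 1 := norm_smul_inv_norm hg
        obtain ⟨S, hS⟩ : ∃ S : EuclideanSpace ℝ (Fin n) ≃ₗᵢ[ℝ] EuclideanSpace ℝ (Fin n),
            S u = (‖g‖⁻¹ : ℝ) • g :=
          ⟨Submodule.reflection (ℝ ∙ (u - (‖g‖⁻¹ : ℝ) • g))ᗮ, Submodule.reflection_sub (by rw [hu, hng])⟩
        have hmap : (∫ ψ, Real.exp (-a * (inner ℝ g ψ : ℝ) ^ 2) ∂μ)
            = ∫ ψ, Real.exp (-a * (inner ℝ g (S ψ) : ℝ) ^ 2) ∂μ := by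
          conv_lhs => rw [← hinv S]
          rw [integral_map S.continuous.aemeasurable]
          exact ((continuous_const.mul
            ((continuous_const.inner continuous_id).pow 2)).rexp).aestronglyMeasurable
        rw [hmap]
        refine integral_congr_ae (Filter.Eventually.of_forall fun ψ => ?_)
        have hgS : (inner ℝ g (S ψ) : ℝ) = ‖g‖ * (inner ℝ u ψ : ℝ) := by
          have hgrepr : g = (‖g‖ : ℝ) • ((‖g‖⁻¹ : ℝ) • g) := by
            rw [smul_smul]
            rw [mul_inv_cancel₀ (norm_ne_zero_iff.mpr hg), one_smul]
          calc (inner ℝ g (S ψ) : ℝ) = (inner ℝ ((‖g‖ : ℝ) • ((‖g‖⁻¹ : ℝ) • g)) (S ψ) : ℝ) := by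
                rw [← hgrepr]
            _ = ‖g‖ * (inner ℝ ((‖g‖⁻¹ : ℝ) • g) (S ψ) : ℝ) := real_inner_smul_left _ _ _
            _ = ‖g‖ * (inner ℝ (S u) (S ψ) : ℝ) := by rw [hS]
            _ = ‖g‖ * (inner ℝ u ψ : ℝ) := by rw [S.inner_map_map]
        simp only [hgS, mul_pow]
    rw [hinv_eq]
    have hfc : Continuous fun ψ : EuclideanSpace ℝ (Fin n) =>
        Real.exp (-a * (‖g‖ ^ 2 * (inner ℝ u ψ : ℝ) ^ 2)) :=
      (continuous_const.mul (continuous_const.mul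
        ((continuous_const.inner continuous_id).pow 2))).rexp
    have hfint : Integrable (fun ψ => Real.exp (-a * (‖g‖ ^ 2 * (inner ℝ u ψ : ℝ) ^ 2))) μ := by
      refine hbdd _ hfc fun x => ?_
      rw [abs_of_pos (Real.exp_pos _), Real.exp_le_one_iff]
      have : 0 ≤ (‖g‖ ^ 2 * (inner ℝ u x : ℝ) ^ 2) := by positivity
      nlinarith
    have honA : ∀ ψ ∈ A, Real.exp (-(a*δ) * ‖g‖ ^ 2)
        ≤ Real.exp (-a * (‖g‖ ^ 2 * (inner ℝ u ψ : ℝ) ^ 2)) := by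
      intro ψ hψ
      rw [Real.exp_le_exp]
      have hA' : (inner ℝ v ψ : ℝ) ^ 2 ≤ δ * ‖v‖ ^ 2 := hψ
      have huv : (inner ℝ u ψ : ℝ) = ‖v‖⁻¹ * (inner ℝ v ψ : ℝ) := real_inner_smul_left _ _ _
      have hun : (inner ℝ u ψ : ℝ) ^ 2 ≤ δ := by
        rw [huv, mul_pow]
        rw [inv_pow]
        rw [inv_mul_le_iff₀ (by positivity)]
        linarith [hA']
      nlinarith [mul_le_mul_of_nonneg_left hun (mul_nonneg ha.le (sq_nonneg ‖g‖))]
    calc (μ A).toReal * Real.exp (-(a*δ) * ‖g‖ ^ 2)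
        = Real.exp (-(a*δ) * ‖g‖ ^ 2) * (μ A).toReal := mul_comm _ _
      _ ≤ ∫ ψ in A, Real.exp (-a * (‖g‖ ^ 2 * (inner ℝ u ψ : ℝ) ^ 2)) ∂μ :=
          by have := setIntegral_ge_of_const_le hAmeas (measure_ne_top μ A) honA hfint.integrableOn
             rwa [smul_eq_mul, mul_comm, measureReal_def] at this
      _ ≤ ∫ ψ, Real.exp (-a * (‖g‖ ^ 2 * (inner ℝ u ψ : ℝ) ^ 2)) ∂μ :=
          setIntegral_le_integral hfint (Filter.Eventually.of_forall fun ψ => (Real.exp_pos _).le)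
  -- assemble step 1
  set c₂ : ℝ := 1/2 + a*δ with hc2_def
  have hc₂ : 0 < c₂ := by positivity
  have hgauss2 : (∫ g : EuclideanSpace ℝ (Fin n), Real.exp (-c₂ * ‖g‖ ^ 2))
      = Real.sqrt (π / c₂) ^ n := by
    have h1 := gauss_int (n := n) (fun _ => c₂)
    rw [Finset.prod_const, Finset.card_univ, Fintype.card_fin] at h1
    rw [← h1]
    refine integral_congr_ae (Filter.Eventually.of_forall fun g => ?_)
    show Real.exp (-c₂ * ‖g‖ ^ 2) = Real.exp (-∑ i, c₂ * g i ^ 2)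
    congr 1
    rw [norm_sq_eucl, neg_mul, neg_inj]
    exact Finset.mul_sum _ _ _
  have hstep1 : (μ A).toReal * Real.sqrt (π / c₂) ^ n ≤ K₁ := by
    have hexpand : ∀ g, (∫ ψ, F ψ g ∂μ)
        = Real.exp (-(1/2 : ℝ) * ‖g‖ ^ 2) * ∫ ψ, Real.exp (-a * (inner ℝ g ψ : ℝ) ^ 2) ∂μ :=
      fun g => integral_const_mul _ _
    have hLHSint : Integrable (fun g : EuclideanSpace ℝ (Fin n) =>
        Real.exp (-(1/2 : ℝ) * ‖g‖ ^ 2) * ((μ A).toReal * Real.exp (-(a*δ) * ‖g‖ ^ 2)))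
        volume := by
      have : (fun g : EuclideanSpace ℝ (Fin n) =>
          Real.exp (-(1/2 : ℝ) * ‖g‖ ^ 2) * ((μ A).toReal * Real.exp (-(a*δ) * ‖g‖ ^ 2)))
          = fun g => (μ A).toReal * Real.exp (-c₂ * ‖g‖ ^ 2) := by
        funext g
        rw [mul_left_comm, ← Real.exp_add]
        congr 2
        rw [hc2_def]
        ring
      rw [this]
      exact (gauss_integrable c₂ hc₂).const_mul _
    have hmono : (∫ g : EuclideanSpace ℝ (Fin n),
          Real.exp (-(1/2 : ℝ) * ‖g‖ ^ 2) * ((μ A).toReal * Real.exp (-(a*δ) * ‖g‖ ^ 2)))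
        ≤ ∫ g : EuclideanSpace ℝ (Fin n), ∫ ψ, F ψ g ∂μ := by
      refine integral_mono hLHSint ?_ ?_
      · exact hFint.integral_prod_right
      · intro g
        show Real.exp (-(1/2 : ℝ) * ‖g‖ ^ 2) * ((μ A).toReal * Real.exp (-(a*δ) * ‖g‖ ^ 2))
          ≤ ∫ ψ, F ψ g ∂μ
        rw [hexpand g]
        exact mul_le_mul_of_nonneg_left (hkey g) (Real.exp_pos _).le
    have hLHSval : (∫ g : EuclideanSpace ℝ (Fin n),
          Real.exp (-(1/2 : ℝ) * ‖g‖ ^ 2) * ((μ A).toReal * Real.exp (-(a*δ) * ‖g‖ ^ 2)))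
        = (μ A).toReal * Real.sqrt (π / c₂) ^ n := by
      have : (fun g : EuclideanSpace ℝ (Fin n) =>
          Real.exp (-(1/2 : ℝ) * ‖g‖ ^ 2) * ((μ A).toReal * Real.exp (-(a*δ) * ‖g‖ ^ 2)))
          = fun g => (μ A).toReal * Real.exp (-c₂ * ‖g‖ ^ 2) := by
        funext g
        rw [mul_left_comm, ← Real.exp_add]
        congr 2
        rw [hc2_def]
        ring
      rw [this, integral_const_mul, hgauss2]
    rw [hLHSval] at hmono
    rw [← hJval, integral_prod_symm _ hFint]
    exact hmono
  -- final algebra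
  have hc1 : 1/2 + a = 1/(2*ε) := by
    rw [ha_def]
    field_simp
    ring
  have hc2val : c₂ = (n + 1 - ε)/(2*n) := by
    rw [hc2_def, ha_def, hδ_def]
    field_simp
    ring
  have hKpos : 0 < Real.sqrt (π / c₂) ^ n := by
    apply pow_pos
    apply Real.sqrt_pos.mpr
    positivity
  have hfinal : K₁ ≤ Real.sqrt (Real.exp 1 * ε) * Real.sqrt (π / c₂) ^ n := by
    have h1 : (0:ℝ) ≤ K₁ := by
      rw [hK1_def]
      positivity
    have h2 : (0:ℝ) ≤ Real.sqrt (Real.exp 1 * ε) * Real.sqrt (π / c₂) ^ n := by positivity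
    have hsq : K₁ ^ 2 ≤ (Real.sqrt (Real.exp 1 * ε) * Real.sqrt (π / c₂) ^ n) ^ 2 := by
      have hK1sq : K₁ ^ 2 = (2*π*ε) * (2*π) ^ (n-1) := by
        rw [hK1_def, mul_pow, Real.sq_sqrt (by positivity : (0:ℝ) ≤ π / (1/2 + a)),
          pow_right_comm, Real.sq_sqrt (by positivity : (0:ℝ) ≤ 2*π), hc1]
        congr 1
        rw [div_div_eq_mul_div, div_one]
        ring
      have hRsq : (Real.sqrt (Real.exp 1 * ε) * Real.sqrt (π / c₂) ^ n) ^ 2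
          = (Real.exp 1 * ε) * (π / c₂) ^ n := by
        rw [mul_pow, Real.sq_sqrt (by positivity : (0:ℝ) ≤ Real.exp 1 * ε),
          pow_right_comm, Real.sq_sqrt (by positivity : (0:ℝ) ≤ π / c₂)]
      have hn1ε : 0 < (n:ℝ) + 1 - ε := by linarith
      have hpc2 : π / c₂ = (2*π) * ((n:ℝ)/((n:ℝ) + 1 - ε)) := by
        rw [hc2val]
        field_simp
      have hLrw : (2*π*ε) * (2*π) ^ (n-1) = ε * (2*π) ^ n := by
        have hn1 : n - 1 + 1 = n := by omega
        calc (2*π*ε) * (2*π) ^ (n-1) = ε * ((2*π) ^ (n-1) * (2*π)) := by ring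
          _ = ε * (2*π) ^ (n-1+1) := by rw [pow_succ]
          _ = ε * (2*π) ^ n := by rw [hn1]
      rw [hK1sq, hRsq, hLrw, hpc2, mul_pow (2*π) ((n:ℝ)/((n:ℝ) + 1 - ε)) n]
      have hmain : (((n:ℝ) + 1 - ε)/n) ^ n ≤ Real.exp 1 := by
        have hle : ((n:ℝ) + 1 - ε)/n ≤ Real.exp ((1-ε)/n) := by
          have h := Real.add_one_le_exp ((1-ε)/(n:ℝ))
          have heq : ((n:ℝ) + 1 - ε)/n = (1-ε)/n + 1 := by field_simp; ring
          rw [heq]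
          exact h
        calc (((n:ℝ) + 1 - ε)/n) ^ n ≤ (Real.exp ((1-ε)/n)) ^ n := by
              apply pow_le_pow_left₀ (by positivity) hle
          _ = Real.exp ((n:ℝ) * ((1-ε)/n)) := (Real.exp_nat_mul _ n).symm
          _ ≤ Real.exp 1 := by
              rw [Real.exp_le_exp, mul_div_assoc', mul_comm, mul_div_assoc,
                div_self (ne_of_gt hn0)]
              linarith
      have hppos : 0 < (((n:ℝ) + 1 - ε)/n) ^ n := by positivity
      have hfrac : ((n:ℝ)/((n:ℝ) + 1 - ε)) ^ n = ((((n:ℝ) + 1 - ε)/n) ^ n)⁻¹ := by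
        rw [← inv_pow, inv_div]
      rw [hfrac]
      have h1le : (1:ℝ) ≤ Real.exp 1 / ((((n:ℝ) + 1 - ε)/n) ^ n) :=
        (one_le_div hppos).mpr hmain
      calc ε * (2*π) ^ n = (ε * (2*π) ^ n) * 1 := (mul_one _).symm
        _ ≤ (ε * (2*π) ^ n) * (Real.exp 1 / ((((n:ℝ) + 1 - ε)/n) ^ n)) :=
            mul_le_mul_of_nonneg_left h1le (by positivity)
        _ = Real.exp 1 * ε * ((2*π) ^ n * ((((n:ℝ) + 1 - ε)/n) ^ n)⁻¹) := by ring
    calc K₁ = Real.sqrt (K₁ ^ 2) := (Real.sqrt_sq h1).symm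
      _ ≤ Real.sqrt ((Real.sqrt (Real.exp 1 * ε) * Real.sqrt (π / c₂) ^ n) ^ 2) :=
          Real.sqrt_le_sqrt hsq
      _ = Real.sqrt (Real.exp 1 * ε) * Real.sqrt (π / c₂) ^ n := Real.sqrt_sq h2
  have : (μ A).toReal * Real.sqrt (π / c₂) ^ n
      ≤ Real.sqrt (Real.exp 1 * ε) * Real.sqrt (π / c₂) ^ n := le_trans hstep1 hfinal
  exact le_of_mul_le_mul_right this hKpos
end
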